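/- arXiv:2504.14015 — 13 statements merged into one kernel-verified Lean document; each statement's English description precedes it below -/
import Mathlib

section
/- Let τ > 0, θ ∈ ℝ, n ∈ ℕ, and let W : Fin n → ℝ and t : Fin n → ℝ satisfy ∑_j W_j · exp(t_j/τ) > 0 and ∑_j W_j − θ > 0. Set t* := τ · log((∑_j W_j · exp(t_j/τ)) / (∑_j W_j − θ)) and assume t_j ≤ t* for all j. Then the nLIF membrane potential at time t*, namely ∑_j W_j · (1 − exp(−(t* − t_j)/τ)), equals θ. -/
/-! Once every input has arrived, `u(s) = ∑ W - exp (-s/τ) * ∑ W j * exp (t j / τ)`, and `T` is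
by construction the time at which `exp (-T/τ)` equals `(∑ W - θ) / ∑ W j * exp (t j / τ)`. -/

open Real Finset

noncomputable def nlifPotential {ι : Type*} [Fintype ι] (τ : ℝ) (W t : ι → ℝ) (s : ℝ) : ℝ :=
  ∑ j ∈ univ.filter (fun j => t j ≤ s), W j * (1 - exp (-(s - t j) / τ))

noncomputable def nlifSpikeTime {ι : Type*} [Fintype ι] (τ θ : ℝ) (W t : ι → ℝ) : ℝ :=
  τ * log ((∑ j, W j * exp (t j / τ)) / ((∑ j, W j) - θ))

theorem sum_mul_one_sub_exp_neg_sub_div {ι : Type*} (s : Finset ι) (τ x : ℝ) (W t : ι → ℝ) :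
    ∑ j ∈ s, W j * (1 - exp (-(x - t j) / τ)) =
      ∑ j ∈ s, W j - exp (-x / τ) * ∑ j ∈ s, W j * exp (t j / τ) := by
  rw [mul_sum, ← sum_sub_distrib]
  refine sum_congr rfl fun j _ => ?_
  rw [show -(x - t j) / τ = -x / τ + t j / τ by ring, exp_add]
  ring

theorem nlifPotential_of_forall_le {ι : Type*} [Fintype ι] {τ s : ℝ} {W t : ι → ℝ}
    (h : ∀ j, t j ≤ s) :
    nlifPotential τ W t s = ∑ j, W j - exp (-s / τ) * ∑ j, W j * exp (t j / τ) := by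
  rw [nlifPotential, filter_true_of_mem fun j _ => h j, sum_mul_one_sub_exp_neg_sub_div]

theorem exp_neg_nlifSpikeTime_div {ι : Type*} [Fintype ι] {τ θ : ℝ} {W t : ι → ℝ} (hτ : τ ≠ 0)
    (hA : 0 < ∑ j, W j * exp (t j / τ)) (hB : 0 < (∑ j, W j) - θ) :
    exp (-nlifSpikeTime τ θ W t / τ) = ((∑ j, W j) - θ) / ∑ j, W j * exp (t j / τ) := by
  rw [nlifSpikeTime, neg_div, mul_div_cancel_left₀ _ hτ, exp_neg, exp_log (div_pos hA hB), inv_div]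

/-- For an nLIF neuron with synaptic time constant `τ > 0`, threshold `θ`,
weights `W` and input spike times `t` satisfying `∑ j, W j * exp (t j / τ) > 0` and
`∑ j, W j - θ > 0`, if `t* = τ * log ((∑ j, W j * exp (t j / τ)) / (∑ j, W j - θ))` and all
inputs spike no later than `t*`, then the membrane potential
`u(s) = ∑_{j : t j ≤ s} W j * (1 - exp (-(s - t j) / τ))` at time `t*` equals `θ`. -/
theorem nLIF_membrane_at_spike_time_eq_threshold
    (τ θ : ℝ) (hτ : 0 < τ) (n : ℕ) (W t : Fin n → ℝ)
    (hA : 0 < ∑ j, W j * Real.exp (t j / τ))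
    (hB : 0 < (∑ j, W j) - θ)
    (tstar : ℝ)
    (htstar : tstar = τ * Real.log ((∑ j, W j * Real.exp (t j / τ)) / ((∑ j, W j) - θ)))
    (hle : ∀ j, t j ≤ tstar) :
    (∑ j ∈ Finset.univ.filter (fun j => t j ≤ tstar),
      W j * (1 - Real.exp (-(tstar - t j) / τ))) = θ := by
  change tstar = nlifSpikeTime τ θ W t at htstar
  change nlifPotential τ W t tstar = θ
  rw [nlifPotential_of_forall_le hle, htstar, exp_neg_nlifSpikeTime_div hτ.ne' hA hB,
    div_mul_cancel₀ _ hA.ne']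
  ring
end

section
/- Let τ > 0, θ > 0, n ∈ ℕ with n ≥ 1, and let W : Fin n → ℝ with W_j > 0 for all j and ∑_j W_j > θ, and let t : Fin n → ℝ be arbitrary input times. Define the nLIF membrane potential u(s) := ∑_{j : t_j ≤ s} W_j · (1 − exp(−(s − t_j)/τ)). Then there exists a unique s* ∈ ℝ with u(s*) = θ; moreover u(s) < θ for all s < s*. -/
/-! Writing each synaptic term as `W j * max 0 (1 - exp (-(s - t j) / τ))` makes the potential `u`
a continuous function of `s` on all of `ℝ`; it vanishes before the first input and tends to
`∑ j, W j`, so the intermediate value theorem produces a crossing of `θ`. Wherever `u` is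
positive some input has already arrived, and its term is still strictly rising; hence `u` is
strictly increasing on `{s | θ ≤ u s}` when `θ > 0`, which makes the crossing unique and forces
`u < θ` before it. -/

open Real Finset Filter Topology

theorem exists_crossing_of_strictMonoOn {X α : Type*} [TopologicalSpace X] [PreconnectedSpace X]
    [LinearOrder X] [LinearOrder α] [TopologicalSpace α] [OrderClosedTopology α]
    {u : X → α} {θ : α} {a b : X} (hu : Continuous u) (hmono : StrictMonoOn u {s | θ ≤ u s})
    (ha : u a ≤ θ) (hb : θ < u b) :
    ∃ s, u s = θ ∧ (∀ s', u s' = θ → s' = s) ∧ ∀ s', s' < s → u s' < θ := by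
  obtain ⟨s, hs⟩ := intermediate_value_univ a b hu ⟨ha, hb.le⟩
  refine ⟨s, hs, fun s' hs' => ?_, fun s' hlt => ?_⟩
  · by_contra hne
    rcases lt_or_gt_of_ne hne with h | h
    · exact (hmono hs'.ge hs.ge h).ne (hs'.trans hs.symm)
    · exact (hmono hs.ge hs'.ge h).ne (hs.trans hs'.symm)
  · by_contra! hle
    exact ((hmono hle hs.ge hlt).trans_eq hs).not_ge hle

noncomputable def nLIFPotential {ι : Type*} [Fintype ι] (τ : ℝ) (W t : ι → ℝ) (s : ℝ) : ℝ :=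
  ∑ j ∈ univ.filter (fun j => t j ≤ s), W j * (1 - exp (-(s - t j) / τ))

/-- Response of a synapse `x` time units after its input spike; the `max` replaces the
restriction of `nLIFPotential` to the inputs with `t j ≤ s`. -/
noncomputable def pspKernel (τ x : ℝ) : ℝ :=
  max 0 (1 - exp (-x / τ))

section pspKernel

variable {τ x y : ℝ}

theorem pspKernel_nonneg : 0 ≤ pspKernel τ x :=
  le_max_left _ _

theorem pspKernel_of_nonpos (hτ : 0 ≤ τ) (hx : x ≤ 0) : pspKernel τ x = 0 := by
  have : 1 ≤ exp (-x / τ) := one_le_exp (div_nonneg (neg_nonneg.2 hx) hτ)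
  exact max_eq_left (by linarith)

theorem pspKernel_of_nonneg (hτ : 0 ≤ τ) (hx : 0 ≤ x) : pspKernel τ x = 1 - exp (-x / τ) := by
  have : exp (-x / τ) ≤ 1 := exp_le_one_iff.2 (div_nonpos_of_nonpos_of_nonneg (neg_nonpos.2 hx) hτ)
  exact max_eq_right (by linarith)

theorem monotone_pspKernel (hτ : 0 ≤ τ) : Monotone (pspKernel τ) := fun x y hxy => by
  have : -y / τ ≤ -x / τ := div_le_div_of_nonneg_right (neg_le_neg hxy) hτ
  exact max_le_max le_rfl (sub_le_sub_left (exp_le_exp.2 this) 1)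

theorem strictMonoOn_pspKernel (hτ : 0 < τ) : StrictMonoOn (pspKernel τ) (Set.Ici 0) :=
  fun x hx y hy hxy => by
  have : -y / τ < -x / τ := div_lt_div_of_pos_right (neg_lt_neg hxy) hτ
  rw [pspKernel_of_nonneg hτ.le hx, pspKernel_of_nonneg hτ.le hy]
  exact sub_lt_sub_left (exp_lt_exp.2 this) 1

@[fun_prop]
theorem continuous_pspKernel : Continuous (pspKernel τ) := by
  unfold pspKernel
  fun_prop

theorem tendsto_pspKernel_atTop (hτ : 0 < τ) : Tendsto (pspKernel τ) atTop (𝓝 1) := by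
  have hexp : Tendsto (fun x => exp (-x / τ)) atTop (𝓝 0) :=
    tendsto_exp_atBot.comp (tendsto_neg_atTop_atBot.atBot_div_const hτ)
  rw [show (1 : ℝ) = max 0 (1 - 0) by norm_num]
  exact tendsto_const_nhds.max (tendsto_const_nhds.sub hexp)

end pspKernel

section nLIFPotential

variable {ι : Type*} [Fintype ι] {τ : ℝ} (W t : ι → ℝ)

theorem nLIFPotential_eq_sum_pspKernel (hτ : 0 ≤ τ) (s : ℝ) :
    nLIFPotential τ W t s = ∑ j, W j * pspKernel τ (s - t j) := by
  rw [nLIFPotential, sum_filter]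
  refine sum_congr rfl fun j _ => ?_
  split_ifs with h
  · rw [pspKernel_of_nonneg hτ (sub_nonneg.2 h)]
  · rw [pspKernel_of_nonpos hτ (by linarith), mul_zero]

theorem continuous_nLIFPotential (hτ : 0 ≤ τ) : Continuous (nLIFPotential τ W t) := by
  rw [funext (nLIFPotential_eq_sum_pspKernel W t hτ)]
  fun_prop

theorem nLIFPotential_eq_zero_of_le (hτ : 0 ≤ τ) {s : ℝ} (hs : ∀ j, s ≤ t j) :
    nLIFPotential τ W t s = 0 := by
  rw [nLIFPotential_eq_sum_pspKernel W t hτ]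
  exact sum_eq_zero fun j _ => by rw [pspKernel_of_nonpos hτ (sub_nonpos.2 (hs j)), mul_zero]

theorem tendsto_nLIFPotential_atTop (hτ : 0 < τ) :
    Tendsto (nLIFPotential τ W t) atTop (𝓝 (∑ j, W j)) := by
  rw [funext (nLIFPotential_eq_sum_pspKernel W t hτ.le)]
  refine tendsto_finsetSum _ fun j _ => ?_
  have hshift : Tendsto (fun s => s - t j) atTop atTop :=
    tendsto_atTop_add_const_right _ _ tendsto_id
  simpa using ((tendsto_pspKernel_atTop hτ).comp hshift).const_mul (W j)

theorem strictMonoOn_nLIFPotential (hτ : 0 < τ) (hW : ∀ j, 0 ≤ W j) :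
    StrictMonoOn (nLIFPotential τ W t) {s | 0 < nLIFPotential τ W t s} := by
  intro a (ha : 0 < nLIFPotential τ W t a) b _ hab
  simp only [nLIFPotential_eq_sum_pspKernel W t hτ.le] at ha ⊢
  obtain ⟨j, -, hj⟩ := exists_lt_of_sum_lt (f := fun _ => (0 : ℝ)) (by simpa using ha)
  have hWj : 0 < W j := pos_of_mul_pos_left hj pspKernel_nonneg
  have harrived : 0 ≤ a - t j := by
    by_contra! h
    rw [pspKernel_of_nonpos hτ.le h.le, mul_zero] at hj
    exact lt_irrefl 0 hj
  have hrise : pspKernel τ (a - t j) < pspKernel τ (b - t j) :=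
    strictMonoOn_pspKernel hτ harrived (Set.mem_Ici.2 (by linarith)) (by linarith)
  refine sum_lt_sum (fun i _ => ?_) ⟨j, mem_univ j, mul_lt_mul_of_pos_left hrise hWj⟩
  exact mul_le_mul_of_nonneg_left (monotone_pspKernel hτ.le (by linarith)) (hW i)

end nLIFPotential

theorem nLIF_positive_weights_unique_spike_time_general
    (τ θ : ℝ) (hτ : 0 < τ) (hθ : 0 < θ) (n : ℕ)
    (W : Fin n → ℝ) (hW : ∀ j, 0 < W j) (hsum : θ < ∑ j, W j)
    (t : Fin n → ℝ) :
    ∃ s : ℝ,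
      (∑ j ∈ Finset.univ.filter (fun j => t j ≤ s),
        W j * (1 - Real.exp (-(s - t j) / τ))) = θ ∧
      (∀ s' : ℝ,
        (∑ j ∈ Finset.univ.filter (fun j => t j ≤ s'),
          W j * (1 - Real.exp (-(s' - t j) / τ))) = θ → s' = s) ∧
      (∀ s' : ℝ, s' < s →
        (∑ j ∈ Finset.univ.filter (fun j => t j ≤ s'),
          W j * (1 - Real.exp (-(s' - t j) / τ))) < θ) := by
  obtain ⟨a, ha⟩ := Finite.bddBelow_range t
  obtain ⟨b, hb⟩ :=
    ((tendsto_nLIFPotential_atTop W t hτ).eventually (eventually_gt_nhds hsum)).exists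
  have hmono : StrictMonoOn (nLIFPotential τ W t) {s | θ ≤ nLIFPotential τ W t s} :=
    (strictMonoOn_nLIFPotential W t hτ fun j => (hW j).le).mono fun _ hs => hθ.trans_le hs
  have hstart : nLIFPotential τ W t a ≤ θ :=
    (nLIFPotential_eq_zero_of_le W t hτ.le fun j => ha (Set.mem_range_self j)).trans_le hθ.le
  exact exists_crossing_of_strictMonoOn (continuous_nLIFPotential W t hτ.le) hmono hstart hb

/-- For an nLIF neuron with `τ > 0`, threshold `θ > 0`, at least one input,
strictly positive weights summing above threshold, and arbitrary input spike times `t`,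
the membrane potential `u(s) = ∑_{j : t j ≤ s} W j * (1 - exp (-(s - t j) / τ))` crosses the
threshold at a unique time `s*`, and `u(s) < θ` for every `s < s*`. -/
theorem nLIF_positive_weights_unique_spike_time
    (τ θ : ℝ) (hτ : 0 < τ) (hθ : 0 < θ) (n : ℕ) (hn : 1 ≤ n)
    (W : Fin n → ℝ) (hW : ∀ j, 0 < W j) (hsum : θ < ∑ j, W j)
    (t : Fin n → ℝ) :
    ∃ s : ℝ,
      (∑ j ∈ Finset.univ.filter (fun j => t j ≤ s),
        W j * (1 - Real.exp (-(s - t j) / τ))) = θ ∧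
      (∀ s' : ℝ,
        (∑ j ∈ Finset.univ.filter (fun j => t j ≤ s'),
          W j * (1 - Real.exp (-(s' - t j) / τ))) = θ → s' = s) ∧
      (∀ s' : ℝ, s' < s →
        (∑ j ∈ Finset.univ.filter (fun j => t j ≤ s'),
          W j * (1 - Real.exp (-(s' - t j) / τ))) < θ) :=
  nLIF_positive_weights_unique_spike_time_general τ θ hτ hθ n W hW hsum t
end

section
/- Let τ > 0, θ ∈ ℝ, δ > 0, W̄ > 0, n ∈ ℕ, and let W : Fin n → ℝ and t : Fin n → ℝ satisfy ∑_j W_j · exp(t_j/τ) > 0, ∑_j W_j − θ ≥ δ, |W_j| ≤ W̄ for all j, and t_j ≤ T(t,W) for all j, where T(t,W) := τ · log((∑_j W_j · exp(t_j/τ)) / (∑_j W_j − θ)). Then for every index k, the partial derivative of T with respect to the input time t_k, which equals W_k · exp(t_k/τ) / (∑_j W_j · exp(t_j/τ)), has absolute value at most W̄/δ. -/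
open Real Finset

/-!
Only the `k`-th summand of `∑ j, W j * exp (t j / τ)` depends on `t k`, so the chain rule through
`τ * log` gives the partial derivative `W k * exp (t k / τ) / ∑ j, W j * exp (t j / τ)`. Causality,
`t k ≤ T`, says `exp (t k / τ) ≤ (∑ j, W j * exp (t j / τ)) / (∑ j, W j - θ)`, which bounds the
partial derivative by `|W k| / (∑ j, W j - θ) ≤ W̄ / δ`.
-/

theorem hasDerivAt_sum_update {ι 𝕜 F : Type*} [Fintype ι] [DecidableEq ι]
    [NontriviallyNormedField 𝕜] [NormedAddCommGroup F] [NormedSpace 𝕜 F]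
    (f : ι → 𝕜 → F) (t : ι → 𝕜) (k : ι) {f' : F} {x : 𝕜}
    (hf : HasDerivAt (f k) f' x) :
    HasDerivAt (fun s => ∑ j, f j (Function.update t k s j)) f' x := by
  have hsplit : (fun s => ∑ j, f j (Function.update t k s j)) =
      fun s => f k s + ∑ j ∈ univ.erase k, f j (t j) := by
    funext s
    rw [← add_sum_erase univ _ (mem_univ k), Function.update_self]
    congr 1
    exact sum_congr rfl fun j hj => by rw [Function.update_of_ne (ne_of_mem_erase hj)]
  rw [hsplit]
  exact hf.add_const _

namespace NLIF

variable {ι : Type*} [Fintype ι] (τ θ : ℝ) (W t : ι → ℝ)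

noncomputable def drive : ℝ := ∑ j, W j * exp (t j / τ)

noncomputable def spikeTime : ℝ := τ * log (drive τ W t / ((∑ j, W j) - θ))

variable {τ θ W t}

theorem hasDerivAt_spikeTime_update [DecidableEq ι] (hτ : τ ≠ 0) (hA : drive τ W t ≠ 0)
    (hC : (∑ j, W j) - θ ≠ 0) (k : ι) :
    HasDerivAt (fun s => spikeTime τ θ W (Function.update t k s))
      (W k * exp (t k / τ) / drive τ W t) (t k) := by
  have hdrive : HasDerivAt (fun s => drive τ W (Function.update t k s))
      (W k * (exp (t k / τ) * (1 / τ))) (t k) :=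
    hasDerivAt_sum_update (fun j s => W j * exp (s / τ)) t k
      (((hasDerivAt_id (t k)).div_const τ).exp.const_mul (W k))
  have hA' : drive τ W (Function.update t k (t k)) = drive τ W t := by
    rw [Function.update_eq_self]
  have hlog := (hdrive.div_const ((∑ j, W j) - θ)).log (by rw [hA']; exact div_ne_zero hA hC)
  rw [hA'] at hlog
  refine (hlog.const_mul τ).congr_deriv ?_
  field_simp

theorem exp_div_le_of_le_spikeTime (hτ : 0 < τ) (hA : 0 < drive τ W t)
    (hC : 0 < (∑ j, W j) - θ) {x : ℝ} (hx : x ≤ spikeTime τ θ W t) :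
    exp (x / τ) ≤ drive τ W t / ((∑ j, W j) - θ) := by
  rw [← exp_log (div_pos hA hC), exp_le_exp, div_le_iff₀' hτ]
  exact hx

theorem abs_partial_spikeTime_le {δ Wbar : ℝ} (hτ : 0 < τ) (hA : 0 < drive τ W t) (hδ : 0 < δ)
    (hB : δ ≤ (∑ j, W j) - θ) {k : ι} (hWk : |W k| ≤ Wbar) (hk : t k ≤ spikeTime τ θ W t) :
    |W k * exp (t k / τ) / drive τ W t| ≤ Wbar / δ := by
  have hC : 0 < (∑ j, W j) - θ := hδ.trans_le hB
  have hexp := exp_div_le_of_le_spikeTime hτ hA hC hk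
  have hWbar : 0 ≤ Wbar := (abs_nonneg _).trans hWk
  rw [abs_div, abs_of_pos hA, abs_mul, abs_of_pos (exp_pos _), div_le_iff₀ hA]
  calc |W k| * exp (t k / τ)
      ≤ Wbar * (drive τ W t / ((∑ j, W j) - θ)) :=
        mul_le_mul hWk hexp (exp_pos _).le hWbar
    _ = drive τ W t * Wbar / ((∑ j, W j) - θ) := by ring
    _ ≤ drive τ W t * Wbar / δ := div_le_div_of_nonneg_left (mul_nonneg hA.le hWbar) hδ hB
    _ = Wbar / δ * drive τ W t := by ring

end NLIF

theorem nLIF_spike_time_deriv_input_bound_general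
    (τ θ δ Wbar : ℝ) (hτ : 0 < τ) (hδ : 0 < δ)
    (n : ℕ) (W t : Fin n → ℝ)
    (hA : 0 < ∑ j, W j * Real.exp (t j / τ))
    (hB : δ ≤ (∑ j, W j) - θ)
    (hWb : ∀ j, |W j| ≤ Wbar)
    (hle : ∀ j, t j ≤ τ * Real.log ((∑ j, W j * Real.exp (t j / τ)) / ((∑ j, W j) - θ)))
    (k : Fin n) :
    HasDerivAt
      (fun s : ℝ => τ * Real.log
        ((∑ j, W j * Real.exp (Function.update t k s j / τ)) / ((∑ j, W j) - θ)))
      (W k * Real.exp (t k / τ) / (∑ j, W j * Real.exp (t j / τ))) (t k) ∧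
    |W k * Real.exp (t k / τ) / (∑ j, W j * Real.exp (t j / τ))| ≤ Wbar / δ :=
  ⟨NLIF.hasDerivAt_spikeTime_update hτ.ne' hA.ne' (hδ.trans_le hB).ne' k,
    NLIF.abs_partial_spikeTime_le hτ hA hδ hB (hWb k) (hle k)⟩

/-- Within a causal piece, the partial derivative of the nLIF output spike
time `T(t,W) = τ * log ((∑ j, W j * exp (t j / τ)) / (∑ j, W j - θ))` with respect to the
input spike time `t k` equals `W k * exp (t k / τ) / (∑ j, W j * exp (t j / τ))`, and its
absolute value is bounded by `W̄ / δ`. -/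
theorem nLIF_spike_time_deriv_input_bound
    (τ θ δ Wbar : ℝ) (hτ : 0 < τ) (hδ : 0 < δ) (hWbar : 0 < Wbar)
    (n : ℕ) (W t : Fin n → ℝ)
    (hA : 0 < ∑ j, W j * Real.exp (t j / τ))
    (hB : δ ≤ (∑ j, W j) - θ)
    (hWb : ∀ j, |W j| ≤ Wbar)
    (hle : ∀ j, t j ≤ τ * Real.log ((∑ j, W j * Real.exp (t j / τ)) / ((∑ j, W j) - θ)))
    (k : Fin n) :
    HasDerivAt
      (fun s : ℝ => τ * Real.log
        ((∑ j, W j * Real.exp (Function.update t k s j / τ)) / ((∑ j, W j) - θ)))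
      (W k * Real.exp (t k / τ) / (∑ j, W j * Real.exp (t j / τ))) (t k) ∧
    |W k * Real.exp (t k / τ) / (∑ j, W j * Real.exp (t j / τ))| ≤ Wbar / δ :=
  nLIF_spike_time_deriv_input_bound_general τ θ δ Wbar hτ hδ n W t hA hB hWb hle k
end

section
/- Let τ > 0, θ ∈ ℝ, δ > 0, n ∈ ℕ, and let W : Fin n → ℝ and t : Fin n → ℝ satisfy ∑_j W_j · exp(t_j/τ) > 0, ∑_j W_j − θ ≥ δ, and t_j ≤ T(t,W) for all j, where T(t,W) := τ · log((∑_j W_j · exp(t_j/τ)) / (∑_j W_j − θ)). Then for every index k, the partial derivative of T with respect to the weight W_k, which equals τ · (exp(t_k/τ) / (∑_j W_j · exp(t_j/τ)) − 1 / (∑_j W_j − θ)), has absolute value at most τ/δ. -/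
/-!
With `A = ∑ j, W j * exp (t j / τ)` and `B = ∑ j, W j - θ`, both affine in `W k` with slopes
`exp (t k / τ)` and `1`, the spike time `τ * log (A / B)` has `W k`-derivative
`τ * (exp (t k / τ) / A - 1 / B)`. Causality `t k ≤ T` says `exp (t k / τ) ≤ A / B`, so both
terms lie in `[0, 1 / B] ⊆ [0, 1 / δ]` and their difference is at most `1 / δ` in absolute value.
-/

open Real Finset

section UpdateCoordinate

variable {𝕜 ι : Type*} [NontriviallyNormedField 𝕜] [DecidableEq ι]

theorem hasDerivAt_update_apply (W : ι → 𝕜) (k j : ι) (w : 𝕜) :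
    HasDerivAt (fun x => Function.update W k x j) (Pi.single (M := fun _ => 𝕜) k 1 j) w :=
  hasDerivAt_pi.1 (hasDerivAt_update W k w) j

theorem hasDerivAt_sum_update_mul [Fintype ι] (W c : ι → 𝕜) (k : ι) (w : 𝕜) :
    HasDerivAt (fun x => ∑ j, Function.update W k x j * c j) (c k) w := by
  simpa [Pi.single_apply] using
    HasDerivAt.fun_sum (u := univ) fun j _ => (hasDerivAt_update_apply W k j w).mul_const (c j)

theorem hasDerivAt_sum_update_s3 [Fintype ι] (W : ι → 𝕜) (k : ι) (w : 𝕜) :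
    HasDerivAt (fun x => ∑ j, Function.update W k x j) 1 w := by
  simpa [Pi.single_apply] using
    HasDerivAt.fun_sum (u := univ) fun j _ => hasDerivAt_update_apply W k j w

end UpdateCoordinate

theorem HasDerivAt.log_div {f g : ℝ → ℝ} {f' g' x : ℝ} (hf : HasDerivAt f f' x)
    (hg : HasDerivAt g g' x) (hfx : f x ≠ 0) (hgx : g x ≠ 0) :
    HasDerivAt (fun y => Real.log (f y / g y)) (f' / f x - g' / g x) x := by
  refine ((hf.div hg hgx).log (div_ne_zero hfx hgx)).congr_deriv ?_
  rw [Pi.div_apply]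
  field_simp

theorem exp_div_le_of_le_mul_log {s τ X : ℝ} (hτ : 0 < τ) (hX : 0 < X) (h : s ≤ τ * log X) :
    exp (s / τ) ≤ X :=
  (le_log_iff_exp_le hX).1 ((div_le_iff₀' hτ).2 h)

theorem abs_div_sub_one_div_le {a A B δ : ℝ} (ha : 0 ≤ a) (hA : 0 < A) (hδ : 0 < δ)
    (hB : δ ≤ B) (haAB : a ≤ A / B) : |a / A - 1 / B| ≤ 1 / δ := by
  have hBpos : 0 < B := hδ.trans_le hB
  have haA : a / A ≤ 1 / B := by
    rw [div_le_div_iff₀ hA hBpos, one_mul]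
    exact (le_div_iff₀ hBpos).1 haAB
  calc |a / A - 1 / B| ≤ 1 / B :=
        abs_sub_le_of_nonneg_of_le (div_nonneg ha hA.le) haA (by positivity) le_rfl
    _ ≤ 1 / δ := one_div_le_one_div_of_le hδ hB

/-- Within a causal piece, the partial derivative of the nLIF output spike
time `T(t,W) = τ * log ((∑ j, W j * exp (t j / τ)) / (∑ j, W j - θ))` with respect to the
weight `W k` equals `τ * (exp (t k / τ) / (∑ j, W j * exp (t j / τ)) - 1 / (∑ j, W j - θ))`,
and its absolute value is bounded by `τ / δ`. -/
theorem nLIF_spike_time_deriv_weight_bound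
    (τ θ δ : ℝ) (hτ : 0 < τ) (hδ : 0 < δ)
    (n : ℕ) (W t : Fin n → ℝ)
    (hA : 0 < ∑ j, W j * Real.exp (t j / τ))
    (hB : δ ≤ (∑ j, W j) - θ)
    (hle : ∀ j, t j ≤ τ * Real.log ((∑ j, W j * Real.exp (t j / τ)) / ((∑ j, W j) - θ)))
    (k : Fin n) :
    HasDerivAt
      (fun w : ℝ => τ * Real.log
        ((∑ j, Function.update W k w j * Real.exp (t j / τ)) /
          ((∑ j, Function.update W k w j) - θ)))
      (τ * (Real.exp (t k / τ) / (∑ j, W j * Real.exp (t j / τ)) - 1 / ((∑ j, W j) - θ)))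
      (W k) ∧
    |τ * (Real.exp (t k / τ) / (∑ j, W j * Real.exp (t j / τ)) - 1 / ((∑ j, W j) - θ))|
      ≤ τ / δ := by
  have hBpos : 0 < (∑ j, W j) - θ := hδ.trans_le hB
  constructor
  · have hsum := hasDerivAt_sum_update_mul W (fun j => exp (t j / τ)) k (W k)
    have hlin := (hasDerivAt_sum_update_s3 W k (W k)).sub_const θ
    have hderiv := hsum.log_div hlin (by simpa using hA.ne') (by simpa using hBpos.ne')
    simpa only [Function.update_eq_self] using hderiv.const_mul τ
  · rw [abs_mul, abs_of_pos hτ, div_eq_mul_one_div τ δ]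
    gcongr
    exact abs_div_sub_one_div_le (exp_pos _).le hA hδ hB
      (exp_div_le_of_le_mul_log hτ (div_pos hA hBpos) (hle k))
end

section
/- Let τ > 0, θ ∈ ℝ, δ > 0, W̄ > 0, n ∈ ℕ, and let D ⊆ ℝ^n × ℝ^n be the set of pairs (t, W) such that t_j ≥ 0 and |W_j| ≤ W̄ for all j, ∑_j W_j · exp(t_j/τ) > 0, ∑_j W_j − θ ≥ δ, and t_j ≤ T(t,W) for all j, where T(t,W) := τ · log((∑_j W_j · exp(t_j/τ)) / (∑_j W_j − θ)). Then for all a, b ∈ D such that the line segment joining a and b is contained in D, |T(a) − T(b)| ≤ 2n · max(W̄/δ, τ/δ) · ‖a − b‖_∞, where ‖·‖_∞ is the supremum norm over all 2n coordinates. -/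
/-! On the segment the spike time is `τ (log N - log M)` with `N = ∑ W_j e^{t_j/τ}` and
`M = ∑ W_j - θ`, whose partial derivatives are `∂T/∂t_j = W_j e^{t_j/τ} / N` and
`∂T/∂W_j = τ (e^{t_j/τ} / N - 1 / M)`. Causality `t_j ≤ T` says exactly `e^{t_j/τ} / N ≤ 1 / M`,
and `1 / M ≤ 1 / δ`, so these partials are bounded by `W̄/δ` and `τ/δ`. The gradient therefore
has norm at most `n (W̄/δ + τ/δ)` as a functional on the sup-normed space, and the mean value
inequality along the segment gives the Lipschitz bound. -/

open Real Finset

/-- The nLIF output spike time as a function of the pair (input spike times, weights). -/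
noncomputable def nLIFSpikeTime (τ θ : ℝ) {n : ℕ} (p : (Fin n → ℝ) × (Fin n → ℝ)) : ℝ :=
  τ * Real.log ((∑ j, p.2 j * Real.exp (p.1 j / τ)) / ((∑ j, p.2 j) - θ))

section Coordinates

variable {ι : Type*}

theorem hasFDerivAt_fst_apply (j : ι) (p : (ι → ℝ) × (ι → ℝ)) :
    HasFDerivAt (fun q : (ι → ℝ) × (ι → ℝ) => q.1 j)
      ((ContinuousLinearMap.proj j).comp (ContinuousLinearMap.fst ℝ _ _)) p :=
  ((ContinuousLinearMap.proj j).comp (ContinuousLinearMap.fst ℝ (ι → ℝ) (ι → ℝ))).hasFDerivAt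

theorem hasFDerivAt_snd_apply (j : ι) (p : (ι → ℝ) × (ι → ℝ)) :
    HasFDerivAt (fun q : (ι → ℝ) × (ι → ℝ) => q.2 j)
      ((ContinuousLinearMap.proj j).comp (ContinuousLinearMap.snd ℝ _ _)) p :=
  ((ContinuousLinearMap.proj j).comp (ContinuousLinearMap.snd ℝ (ι → ℝ) (ι → ℝ))).hasFDerivAt

variable [Fintype ι]

noncomputable def coordPairing (α β : ι → ℝ) : (ι → ℝ) × (ι → ℝ) →L[ℝ] ℝ :=
  ∑ j, (α j • (ContinuousLinearMap.proj j).comp (ContinuousLinearMap.fst ℝ _ _) +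
    β j • (ContinuousLinearMap.proj j).comp (ContinuousLinearMap.snd ℝ _ _))

@[simp]
theorem coordPairing_apply (α β : ι → ℝ) (v : (ι → ℝ) × (ι → ℝ)) :
    coordPairing α β v = ∑ j, (α j * v.1 j + β j * v.2 j) := by
  simp [coordPairing]

theorem norm_coordPairing_le (α β : ι → ℝ) :
    ‖coordPairing α β‖ ≤ ∑ j, (|α j| + |β j|) := by
  refine ContinuousLinearMap.opNorm_le_bound _ (by positivity) fun v => ?_
  have h1 : ∀ j, |v.1 j| ≤ ‖v‖ := fun j => (norm_le_pi_norm v.1 j).trans (norm_fst_le v)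
  have h2 : ∀ j, |v.2 j| ≤ ‖v‖ := fun j => (norm_le_pi_norm v.2 j).trans (norm_snd_le v)
  calc ‖coordPairing α β v‖ ≤ ∑ j, (|α j| * |v.1 j| + |β j| * |v.2 j|) := by
        rw [coordPairing_apply, Real.norm_eq_abs]
        refine (abs_sum_le_sum_abs _ _).trans (sum_le_sum fun j _ => ?_)
        simpa only [abs_mul] using abs_add_le (α j * v.1 j) (β j * v.2 j)
    _ ≤ ∑ j, (|α j| * ‖v‖ + |β j| * ‖v‖) := by
        gcongr with j
        exacts [h1 j, h2 j]
    _ = (∑ j, (|α j| + |β j|)) * ‖v‖ := by simp only [sum_mul, add_mul]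

end Coordinates

section SpikeTime

variable {n : ℕ} (τ θ : ℝ)

noncomputable def nLIFNumerator (p : (Fin n → ℝ) × (Fin n → ℝ)) : ℝ :=
  ∑ j, p.2 j * exp (p.1 j / τ)

noncomputable def nLIFMargin (p : (Fin n → ℝ) × (Fin n → ℝ)) : ℝ :=
  ∑ j, p.2 j - θ

theorem hasFDerivAt_nLIFNumerator (p : (Fin n → ℝ) × (Fin n → ℝ)) :
    HasFDerivAt (nLIFNumerator τ) (coordPairing (fun j => p.2 j * exp (p.1 j / τ) / τ)
      (fun j => exp (p.1 j / τ))) p := by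
  have h := HasFDerivAt.fun_sum (u := univ) fun j _ =>
    (hasFDerivAt_snd_apply j p).mul ((hasFDerivAt_fst_apply j p).mul_const τ⁻¹).exp
  simp only [← div_eq_mul_inv] at h
  refine h.congr_fderiv (ContinuousLinearMap.ext fun v => ?_)
  simp only [_root_.sum_apply, add_apply, smul_apply, ContinuousLinearMap.comp_apply,
    ContinuousLinearMap.coe_fst', ContinuousLinearMap.proj_apply, smul_eq_mul,
    ContinuousLinearMap.coe_snd', coordPairing_apply]
  exact sum_congr rfl fun j _ => by ring

theorem hasFDerivAt_nLIFMargin (p : (Fin n → ℝ) × (Fin n → ℝ)) :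
    HasFDerivAt (nLIFMargin θ) (coordPairing 0 1) p := by
  have h := (HasFDerivAt.fun_sum (u := univ) fun j _ => hasFDerivAt_snd_apply j p).sub_const θ
  refine h.congr_fderiv (ContinuousLinearMap.ext fun v => ?_)
  simp

noncomputable def nLIFSpikeTimeGrad (p : (Fin n → ℝ) × (Fin n → ℝ)) :
    (Fin n → ℝ) × (Fin n → ℝ) →L[ℝ] ℝ :=
  coordPairing (fun j => p.2 j * exp (p.1 j / τ) / nLIFNumerator τ p)
    (fun j => τ * (exp (p.1 j / τ) / nLIFNumerator τ p - 1 / nLIFMargin θ p))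

theorem hasFDerivAt_nLIFSpikeTime {p : (Fin n → ℝ) × (Fin n → ℝ)} (hτ : τ ≠ 0)
    (hN : nLIFNumerator τ p ≠ 0) (hM : nLIFMargin θ p ≠ 0) :
    HasFDerivAt (nLIFSpikeTime τ θ) (nLIFSpikeTimeGrad τ θ p) p := by
  have hN' := hasFDerivAt_nLIFNumerator τ p
  have hM' := hasFDerivAt_nLIFMargin θ p
  have h := ((hN'.log hN).sub (hM'.log hM)).const_mul τ
  have hlog : nLIFSpikeTime τ θ =ᶠ[nhds p]
      fun q => τ * (log (nLIFNumerator τ q) - log (nLIFMargin θ q)) := by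
    filter_upwards [hN'.continuousAt.eventually_ne hN, hM'.continuousAt.eventually_ne hM]
      with q hNq hMq
    rw [← log_div hNq hMq]
    rfl
  refine (h.congr_of_eventuallyEq hlog).congr_fderiv (ContinuousLinearMap.ext fun v => ?_)
  simp only [nLIFSpikeTimeGrad, coordPairing_apply, smul_apply, sub_apply, smul_eq_mul,
    Pi.zero_apply, Pi.one_apply, mul_sum, ← sum_sub_distrib]
  refine sum_congr rfl fun j _ => ?_
  field_simp
  ring

theorem exp_div_nLIFNumerator_le {p : (Fin n → ℝ) × (Fin n → ℝ)} (hτ : 0 < τ)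
    (hN : 0 < nLIFNumerator τ p) (hM : 0 < nLIFMargin θ p) {j : Fin n}
    (hcausal : p.1 j ≤ nLIFSpikeTime τ θ p) :
    exp (p.1 j / τ) / nLIFNumerator τ p ≤ 1 / nLIFMargin θ p := by
  have h : p.1 j / τ ≤ log (nLIFNumerator τ p / nLIFMargin θ p) := by
    rw [div_le_iff₀ hτ, mul_comm]
    exact hcausal
  rw [le_log_iff_exp_le (div_pos hN hM)] at h
  rwa [div_le_div_iff₀ hN hM, one_mul, ← le_div_iff₀ hM]

theorem norm_nLIFSpikeTimeGrad_le {p : (Fin n → ℝ) × (Fin n → ℝ)} {δ Wbar : ℝ}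
    (hτ : 0 < τ) (hδ : 0 < δ) (hN : 0 < nLIFNumerator τ p) (hM : δ ≤ nLIFMargin θ p)
    (hW : ∀ j, |p.2 j| ≤ Wbar) (hcausal : ∀ j, p.1 j ≤ nLIFSpikeTime τ θ p) :
    ‖nLIFSpikeTimeGrad τ θ p‖ ≤ n * (Wbar / δ + τ / δ) := by
  have hM₀ : 0 < nLIFMargin θ p := hδ.trans_le hM
  have hMδ : 1 / nLIFMargin θ p ≤ 1 / δ := one_div_le_one_div_of_le hδ hM
  have hterm : ∀ j, |p.2 j * exp (p.1 j / τ) / nLIFNumerator τ p| +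
      |τ * (exp (p.1 j / τ) / nLIFNumerator τ p - 1 / nLIFMargin θ p)| ≤ Wbar / δ + τ / δ := by
    intro j
    have hr₀ : 0 ≤ exp (p.1 j / τ) / nLIFNumerator τ p := by positivity
    have hr := exp_div_nLIFNumerator_le τ θ hτ hN hM₀ (hcausal j)
    have hW₀ : 0 ≤ Wbar := (abs_nonneg _).trans (hW j)
    refine add_le_add ?_ ?_
    · rw [mul_div_assoc, abs_mul, abs_of_nonneg hr₀, div_eq_mul_one_div Wbar δ]
      exact mul_le_mul (hW j) (hr.trans hMδ) hr₀ hW₀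
    · rw [abs_mul, abs_of_pos hτ, div_eq_mul_one_div τ δ]
      refine mul_le_mul_of_nonneg_left ?_ hτ.le
      exact (abs_sub_le_of_nonneg_of_le hr₀ hr (by positivity) le_rfl).trans hMδ
  calc ‖nLIFSpikeTimeGrad τ θ p‖ ≤ ∑ _j : Fin n, (Wbar / δ + τ / δ) :=
        (norm_coordPairing_le _ _).trans (sum_le_sum fun j _ => hterm j)
    _ = n * (Wbar / δ + τ / δ) := by simp [mul_add]

end SpikeTime

theorem nLIF_spike_time_lipschitz_on_causal_piece_general
    (τ θ δ Wbar : ℝ) (hτ : 0 < τ) (hδ : 0 < δ) (n : ℕ)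
    (D : Set ((Fin n → ℝ) × (Fin n → ℝ)))
    (hD : D = {p : (Fin n → ℝ) × (Fin n → ℝ) |
      (∀ j, 0 ≤ p.1 j) ∧ (∀ j, |p.2 j| ≤ Wbar) ∧
      (0 < ∑ j, p.2 j * Real.exp (p.1 j / τ)) ∧
      (δ ≤ (∑ j, p.2 j) - θ) ∧
      (∀ j, p.1 j ≤ nLIFSpikeTime τ θ p)})
    (a b : (Fin n → ℝ) × (Fin n → ℝ))
    (hseg : segment ℝ a b ⊆ D) :
    |nLIFSpikeTime τ θ a - nLIFSpikeTime τ θ b|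
      ≤ 2 * n * max (Wbar / δ) (τ / δ) * ‖a - b‖ := by
  subst hD
  have hderiv : ∀ p ∈ segment ℝ a b, HasFDerivWithinAt (nLIFSpikeTime τ θ)
      (nLIFSpikeTimeGrad τ θ p) (segment ℝ a b) p := fun p hp =>
    have ⟨_, _, hN, hM, _⟩ := hseg hp
    (hasFDerivAt_nLIFSpikeTime τ θ hτ.ne' hN.ne' (hδ.trans_le hM).ne').hasFDerivWithinAt
  have hgrad : ∀ p ∈ segment ℝ a b, ‖nLIFSpikeTimeGrad τ θ p‖ ≤ n * (Wbar / δ + τ / δ) :=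
    fun p hp =>
      have ⟨_, hW, hN, hM, hcausal⟩ := hseg hp
      norm_nLIFSpikeTimeGrad_le τ θ hτ hδ hN hM hW hcausal
  have hmax : Wbar / δ + τ / δ ≤ 2 * max (Wbar / δ) (τ / δ) := by
    linarith [le_max_left (Wbar / δ) (τ / δ), le_max_right (Wbar / δ) (τ / δ)]
  calc |nLIFSpikeTime τ θ a - nLIFSpikeTime τ θ b| ≤ n * (Wbar / δ + τ / δ) * ‖a - b‖ :=
        (convex_segment a b).norm_image_sub_le_of_norm_hasFDerivWithin_le hderiv hgrad
          (right_mem_segment ℝ a b) (left_mem_segment ℝ a b)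
    _ ≤ n * (2 * max (Wbar / δ) (τ / δ)) * ‖a - b‖ := by gcongr
    _ = 2 * n * max (Wbar / δ) (τ / δ) * ‖a - b‖ := by ring

/-- **Theorem 1 of the paper.** On the causal-piece domain `D` (input times
nonnegative, weights bounded by `W̄`, positive numerator, weight sum exceeding the threshold
by at least `δ`, and all inputs preceding the output spike), the output spike time is
Lipschitz with constant `2n * max (W̄/δ) (τ/δ)` with respect to the sup norm on the `2n`
coordinates, along segments contained in `D`.  Here the norm on
`(Fin n → ℝ) × (Fin n → ℝ)` is the sup norm over all `2n` coordinates. -/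
theorem nLIF_spike_time_lipschitz_on_causal_piece
    (τ θ δ Wbar : ℝ) (hτ : 0 < τ) (hδ : 0 < δ) (hWbar : 0 < Wbar) (n : ℕ)
    (D : Set ((Fin n → ℝ) × (Fin n → ℝ)))
    (hD : D = {p : (Fin n → ℝ) × (Fin n → ℝ) |
      (∀ j, 0 ≤ p.1 j) ∧ (∀ j, |p.2 j| ≤ Wbar) ∧
      (0 < ∑ j, p.2 j * Real.exp (p.1 j / τ)) ∧
      (δ ≤ (∑ j, p.2 j) - θ) ∧
      (∀ j, p.1 j ≤ nLIFSpikeTime τ θ p)})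
    (a b : (Fin n → ℝ) × (Fin n → ℝ)) (ha : a ∈ D) (hb : b ∈ D)
    (hseg : segment ℝ a b ⊆ D) :
    |nLIFSpikeTime τ θ a - nLIFSpikeTime τ θ b|
      ≤ 2 * n * max (Wbar / δ) (τ / δ) * ‖a - b‖ :=
  nLIF_spike_time_lipschitz_on_causal_piece_general τ θ δ Wbar hτ hδ n D hD a b hseg
end

section
/- Let τ > 0 and θ ∈ ℝ. Let A, B, M ∈ ℝ with A > 0, B − θ > 0, and B + M − θ > 0, and set t* := τ · log(A / (B − θ)). Then τ · log((A + M · exp(t*/τ)) / (B + M − θ)) = t*. In particular, for an nLIF neuron with causal set C, adding an extra input with arbitrary weight M arriving exactly at the output spike time t* (here A = ∑_{j∈C} W_j · exp(t_j/τ) and B = ∑_{j∈C} W_j) does not change the output spike time, provided the enlarged weight sum still exceeds the threshold. -/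
open Real

/-- For `τ > 0`, threshold `θ`, with `A > 0`, `B - θ > 0` and
`B + M - θ > 0`, putting `t* = τ * log (A / (B - θ))`, one has
`τ * log ((A + M * exp (t*/τ)) / (B + M - θ)) = t*`: adding an extra input of arbitrary
weight `M` arriving exactly at the output spike time does not change the output spike time,
provided the enlarged weight sum still exceeds the threshold. -/
theorem nLIF_spike_time_invariant_extra_input_at_spike
    (τ θ A B M : ℝ) (hτ : 0 < τ) (hA : 0 < A) (hB : 0 < B - θ) (hBM : 0 < B + M - θ) :
    τ * Real.log ((A + M * Real.exp ((τ * Real.log (A / (B - θ))) / τ)) / (B + M - θ))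
      = τ * Real.log (A / (B - θ)) := by
  have h1 : (τ * Real.log (A / (B - θ))) / τ = Real.log (A / (B - θ)) := by
    field_simp
  rw [h1, Real.exp_log (div_pos hA hB)]
  have h2 : (A + M * (A / (B - θ))) / (B + M - θ) = A / (B - θ) := by
    field_simp
    ring
  rw [h2]
end

section
/- Let τ > 0, θ ∈ ℝ, t_max > 0, W̄ > 0, ε > 0, and let C be a finite index set together with one extra index N ∉ C. Let t_j, t̃_j ∈ [0, t_max] for all j ∈ C ∪ {N}, and let W_j (j ∈ C) and W̃_j (j ∈ C ∪ {N}) be weights with absolute value at most W̄. Assume ∑_{j∈C} W_j − θ > 0, ∑_{j∈C} W̃_j + W̃_N − θ ≥ ε, and that T := (∑_{j∈C} W_j · exp(t_j/τ)) / (∑_{j∈C} W_j − θ) satisfies T > 0 and t_N = τ · log T. Let T̃ := (∑_{j∈C} W̃_j · exp(t̃_j/τ) + W̃_N · exp(t̃_N/τ)) / (∑_{j∈C} W̃_j + W̃_N − θ). Then |T − T̃| ≤ (exp(t_max/τ) / (ε · τ)) · ∑_{j∈C∪{N}} W̄ · |t̃_j − t_j| + ((exp(t_max/τ) − 1) / ε)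 · ∑_{j∈C} |W̃_j − W_j|. -/
/-!
Write `e j = exp (t j / τ)`, `e' j = exp (t' j / τ)` and `B̃`, `S̃` for the denominator and
numerator of `T̃`. At the boundary `e N = T`, so using `T (∑_C W - θ) = ∑_C W e` one gets
`T B̃ - S̃ = ∑_C (W j (e j - e' j) + (W' j - W j)(T - e' j)) + W' N (e N - e' N)`.
All of `T`, `e j`, `e' j` lie in `[1, exp (tmax / τ)]`, on which `s ↦ exp (s / τ)` is
`exp (tmax / τ) / τ`-Lipschitz; this bounds every term, and dividing by `B̃ ≥ ε` finishes.
-/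

open Real Finset

namespace Real

lemma abs_exp_sub_exp_le_exp_mul {x y M : ℝ} (hx : x ≤ M) (hy : y ≤ M) :
    |exp x - exp y| ≤ exp M * |x - y| := by
  wlog hyx : y ≤ x generalizing x y
  · rw [abs_sub_comm, abs_sub_comm x]
    exact this hy hx (le_of_not_ge hyx)
  have hexp_y : exp y = exp x * exp (-(x - y)) := by rw [← exp_add]; ring_nf
  rw [abs_of_nonneg (sub_nonneg.2 (exp_le_exp.2 hyx)), abs_of_nonneg (sub_nonneg.2 hyx)]
  calc exp x - exp y = exp x * (1 - exp (-(x - y))) := by rw [hexp_y]; ring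
    _ ≤ exp x * (x - y) :=
        mul_le_mul_of_nonneg_left (by linarith [one_sub_le_exp_neg (x - y)]) (exp_pos x).le
    _ ≤ exp M * (x - y) := by gcongr

lemma abs_exp_div_sub_exp_div_le {τ s s' tmax : ℝ} (hτ : 0 < τ) (hs : s ≤ tmax)
    (hs' : s' ≤ tmax) :
    |exp (s / τ) - exp (s' / τ)| ≤ exp (tmax / τ) / τ * |s' - s| := by
  calc |exp (s / τ) - exp (s' / τ)| ≤ exp (tmax / τ) * |s / τ - s' / τ| :=
        abs_exp_sub_exp_le_exp_mul (div_le_div_of_nonneg_right hs hτ.le)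
          (div_le_div_of_nonneg_right hs' hτ.le)
    _ = exp (tmax / τ) / τ * |s' - s| := by
        rw [← sub_div, abs_div, abs_of_pos hτ, abs_sub_comm]; ring

lemma exp_div_mem_Icc {τ s tmax : ℝ} (hτ : 0 < τ) (hs : s ∈ Set.Icc 0 tmax) :
    exp (s / τ) ∈ Set.Icc 1 (exp (tmax / τ)) :=
  ⟨one_le_exp (div_nonneg hs.1 hτ.le), exp_le_exp.2 (div_le_div_of_nonneg_right hs.2 hτ.le)⟩

end Real

section Boundary

variable {ι : Type*} {C : Finset ι} {N : ι} {θ T : ℝ} {W W' e e' : ι → ℝ}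

lemma mul_sub_eq_sum_of_boundary (hT : T * ((∑ j ∈ C, W j) - θ) = ∑ j ∈ C, W j * e j)
    (hTN : e N = T) :
    T * ((∑ j ∈ C, W' j) + W' N - θ) - ((∑ j ∈ C, W' j * e' j) + W' N * e' N)
      = (∑ j ∈ C, (W j * (e j - e' j) + (W' j - W j) * (T - e' j)))
        + W' N * (e N - e' N) := by
  simp only [sum_add_distrib, mul_sub, sub_mul, sum_sub_distrib, ← sum_mul]
  linear_combination hT - W' N * hTN

lemma abs_sum_add_le_of_boundary [DecidableEq ι] {Wbar D : ℝ} {d : ι → ℝ} (hN : N ∉ C)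
    (hW : ∀ j ∈ C, |W j| ≤ Wbar) (hWN : |W' N| ≤ Wbar)
    (hd : ∀ j ∈ insert N C, |e j - e' j| ≤ d j) (hD : ∀ j ∈ C, |T - e' j| ≤ D) :
    |(∑ j ∈ C, (W j * (e j - e' j) + (W' j - W j) * (T - e' j))) + W' N * (e N - e' N)|
      ≤ Wbar * (∑ j ∈ insert N C, d j) + D * (∑ j ∈ C, |W' j - W j|) := by
  have hterm : ∀ j ∈ C, |W j * (e j - e' j) + (W' j - W j) * (T - e' j)|
      ≤ Wbar * d j + D * |W' j - W j| := fun j hj => by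
    have hdj := hd j (mem_insert_of_mem hj)
    calc _ ≤ |W j| * |e j - e' j| + |W' j - W j| * |T - e' j| := by
          rw [← abs_mul, ← abs_mul]; exact abs_add_le _ _
      _ ≤ Wbar * d j + |W' j - W j| * D :=
          add_le_add (mul_le_mul (hW j hj) hdj (abs_nonneg _) ((abs_nonneg _).trans (hW j hj)))
            (mul_le_mul_of_nonneg_left (hD j hj) (abs_nonneg _))
      _ = Wbar * d j + D * |W' j - W j| := by ring
  have hNterm : |W' N * (e N - e' N)| ≤ Wbar * d N := by
    have hdN := hd N (mem_insert_self N C)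
    rw [abs_mul]
    exact mul_le_mul hWN hdN (abs_nonneg _) ((abs_nonneg _).trans hWN)
  calc _ ≤ (∑ j ∈ C, |W j * (e j - e' j) + (W' j - W j) * (T - e' j)|)
        + |W' N * (e N - e' N)| :=
        (abs_add_le _ _).trans (add_le_add_left (abs_sum_le_sum_abs _ _) _)
    _ ≤ (∑ j ∈ C, (Wbar * d j + D * |W' j - W j|)) + Wbar * d N :=
        add_le_add (sum_le_sum hterm) hNterm
    _ = Wbar * (∑ j ∈ insert N C, d j) + D * (∑ j ∈ C, |W' j - W j|) := by
        rw [sum_insert hN, sum_add_distrib, ← mul_sum, ← mul_sum]; ring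

end Boundary

theorem nLIF_spike_time_boundary_estimate_general
    {ι : Type*} [DecidableEq ι] (C : Finset ι) (N : ι) (hN : N ∉ C)
    (τ θ tmax Wbar ε : ℝ) (hτ : 0 < τ) (hε : 0 < ε)
    (t t' W W' : ι → ℝ)
    (ht : ∀ j ∈ insert N C, t j ∈ Set.Icc (0 : ℝ) tmax)
    (ht' : ∀ j ∈ insert N C, t' j ∈ Set.Icc (0 : ℝ) tmax)
    (hW : ∀ j ∈ C, |W j| ≤ Wbar)
    (hW' : ∀ j ∈ insert N C, |W' j| ≤ Wbar)
    (hB : 0 < (∑ j ∈ C, W j) - θ)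
    (hB' : ε ≤ (∑ j ∈ C, W' j) + W' N - θ)
    (T : ℝ)
    (hT : T = (∑ j ∈ C, W j * Real.exp (t j / τ)) / ((∑ j ∈ C, W j) - θ))
    (hTpos : 0 < T) (htN : t N = τ * Real.log T)
    (T' : ℝ)
    (hT' : T' = ((∑ j ∈ C, W' j * Real.exp (t' j / τ)) + W' N * Real.exp (t' N / τ)) /
      ((∑ j ∈ C, W' j) + W' N - θ)) :
    |T - T'| ≤ (Real.exp (tmax / τ) / (ε * τ)) * (∑ j ∈ insert N C, Wbar * |t' j - t j|)
      + ((Real.exp (tmax / τ) - 1) / ε) * (∑ j ∈ C, |W' j - W j|) := by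
  set E := exp (tmax / τ)
  have hTN : exp (t N / τ) = T := by
    rw [htN, mul_div_cancel_left₀ _ hτ.ne', exp_log hTpos]
  have hTB : T * ((∑ j ∈ C, W j) - θ) = ∑ j ∈ C, W j * exp (t j / τ) := by
    rw [hT]; exact div_mul_cancel₀ _ hB.ne'
  have hB'pos : 0 < (∑ j ∈ C, W' j) + W' N - θ := hε.trans_le hB'
  have hT_mem : T ∈ Set.Icc 1 E := hTN ▸ exp_div_mem_Icc hτ (ht N (mem_insert_self N C))
  have hnum := abs_sum_add_le_of_boundary (D := E - 1) hN hW (hW' N (mem_insert_self N C))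
    (fun j hj => abs_exp_div_sub_exp_div_le hτ (ht j hj).2 (ht' j hj).2)
    fun j hj => have he' := exp_div_mem_Icc hτ (ht' j (mem_insert_of_mem hj))
      abs_sub_le_of_le_of_le hT_mem.1 hT_mem.2 he'.1 he'.2
  rw [hT', sub_div' hB'pos.ne', mul_sub_eq_sum_of_boundary hTB hTN, abs_div, abs_of_pos hB'pos]
  have hWbar_sum : Wbar * ∑ j ∈ insert N C, E / τ * |t' j - t j|
      = E / τ * ∑ j ∈ insert N C, Wbar * |t' j - t j| := by
    rw [mul_sum, mul_sum]
    exact sum_congr rfl fun j _ => mul_left_comm _ _ _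
  calc _ ≤ (E / τ * (∑ j ∈ insert N C, Wbar * |t' j - t j|)
        + (E - 1) * (∑ j ∈ C, |W' j - W j|)) / ε := by
        rw [← hWbar_sum]
        gcongr
        exact (abs_nonneg _).trans hnum
    _ = _ := by ring

/-- Quantitative continuity of the (exponentiated) nLIF spike time across
the boundary between two neighbouring causal pieces: comparing the quantity
`T = (∑_{j∈C} W j * exp (t j / τ)) / (∑_{j∈C} W j - θ)` of a causal set `C` with the quantity
`T̃` of the neighbouring causal set `C ∪ {N}` (evaluated at the boundary `t N = τ * log T`),
the difference is controlled linearly by the perturbations of the spike times and weights. -/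
theorem nLIF_spike_time_boundary_estimate
    {ι : Type*} [DecidableEq ι] (C : Finset ι) (N : ι) (hN : N ∉ C)
    (τ θ tmax Wbar ε : ℝ) (hτ : 0 < τ) (htmax : 0 < tmax) (hWbar : 0 < Wbar) (hε : 0 < ε)
    (t t' W W' : ι → ℝ)
    (ht : ∀ j ∈ insert N C, t j ∈ Set.Icc (0 : ℝ) tmax)
    (ht' : ∀ j ∈ insert N C, t' j ∈ Set.Icc (0 : ℝ) tmax)
    (hW : ∀ j ∈ C, |W j| ≤ Wbar)
    (hW' : ∀ j ∈ insert N C, |W' j| ≤ Wbar)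
    (hB : 0 < (∑ j ∈ C, W j) - θ)
    (hB' : ε ≤ (∑ j ∈ C, W' j) + W' N - θ)
    (T : ℝ)
    (hT : T = (∑ j ∈ C, W j * Real.exp (t j / τ)) / ((∑ j ∈ C, W j) - θ))
    (hTpos : 0 < T) (htN : t N = τ * Real.log T)
    (T' : ℝ)
    (hT' : T' = ((∑ j ∈ C, W' j * Real.exp (t' j / τ)) + W' N * Real.exp (t' N / τ)) /
      ((∑ j ∈ C, W' j) + W' N - θ)) :
    |T - T'| ≤ (Real.exp (tmax / τ) / (ε * τ)) * (∑ j ∈ insert N C, Wbar * |t' j - t j|)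
      + ((Real.exp (tmax / τ) - 1) / ε) * (∑ j ∈ C, |W' j - W j|) :=
  nLIF_spike_time_boundary_estimate_general C N hN τ θ tmax Wbar ε hτ hε t t' W W' ht ht' hW hW' hB
    hB' T hT hTpos htN T' hT'
end

section
/- Let a < b be real numbers, τ > 0, let Ψ : [a,b] → ℝ be continuous with Ψ(x) > 0 for all x ∈ [a,b], and let g : [a,b] → ℝ be continuous. Set ζ := max(sup_{x∈[a,b]} Ψ(x), sup_{x∈[a,b]} exp(g(x)/τ)). Then sup_{x∈[a,b]} |τ · log(Ψ(x)) − g(x)| ≥ (τ/ζ) · sup_{x∈[a,b]} |Ψ(x) − exp(g(x)/τ)|. -/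
open Real Set

/-! The exponential is Lipschitz on `(-∞, m]` with constant `eᵐ`. Writing `Ψ = exp (log Ψ)`,
this gives pointwise `|Ψ - exp (g / τ)| ≤ (ζ / τ) |τ log Ψ - g|`, and taking suprema gives the
bound. -/

lemma abs_exp_sub_exp_le_max_mul (u v : ℝ) :
    |exp u - exp v| ≤ max (exp u) (exp v) * |u - v| := by
  wlog h : v ≤ u generalizing u v
  · rw [abs_sub_comm, max_comm, abs_sub_comm u]
    exact this v u (le_of_not_ge h)
  calc |exp u - exp v| = exp u * (1 - exp (-(u - v))) := by
        rw [abs_of_nonneg (sub_nonneg.2 (exp_le_exp.2 h)), mul_sub, mul_one, ← exp_add]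
        ring_nf
    _ ≤ exp u * (u - v) :=
        mul_le_mul_of_nonneg_left (by linarith [add_one_le_exp (-(u - v))]) (exp_pos u).le
    _ ≤ max (exp u) (exp v) * |u - v| := by
        rw [abs_of_nonneg (sub_nonneg.2 h)]
        gcongr
        exact le_max_left _ _

lemma abs_sub_exp_div_le {y τ : ℝ} (hy : 0 < y) (hτ : 0 < τ) (t : ℝ) :
    |y - exp (t / τ)| ≤ max y (exp (t / τ)) / τ * |τ * log y - t| := by
  have hlog : |τ * log y - t| = τ * |log y - t / τ| := by
    rw [← abs_of_pos hτ, ← abs_mul, abs_of_pos hτ, mul_sub, mul_div_cancel₀ _ hτ.ne']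
  rw [hlog, ← mul_assoc, div_mul_cancel₀ _ hτ.ne']
  simpa only [exp_log hy] using abs_exp_sub_exp_le_max_mul (log y) (t / τ)

lemma sSup_image_le_mul_sSup_image {α : Type*} {s : Set α} {f h : α → ℝ} {c : ℝ} (hc : 0 ≤ c)
    (hbdd : BddAbove (h '' s)) (h_nonneg : ∀ x ∈ s, 0 ≤ h x) (hfh : ∀ x ∈ s, f x ≤ c * h x) :
    sSup (f '' s) ≤ c * sSup (h '' s) := by
  refine Real.sSup_le ?_ (mul_nonneg hc (Real.sSup_nonneg ?_))
  · rintro _ ⟨x, hx, rfl⟩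
    exact (hfh x hx).trans (by gcongr; exact le_csSup hbdd (mem_image_of_mem h hx))
  · rintro _ ⟨x, hx, rfl⟩
    exact h_nonneg x hx

theorem log_comparison_sup_bound_general
    (a b τ : ℝ) (hτ : 0 < τ)
    (Ψ g : ℝ → ℝ)
    (hΨc : ContinuousOn Ψ (Set.Icc a b))
    (hΨpos : ∀ x ∈ Set.Icc a b, 0 < Ψ x)
    (hgc : ContinuousOn g (Set.Icc a b)) :
    (τ / max (sSup (Ψ '' Set.Icc a b))
        (sSup ((fun x => Real.exp (g x / τ)) '' Set.Icc a b))) *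
      sSup ((fun x => |Ψ x - Real.exp (g x / τ)|) '' Set.Icc a b)
    ≤ sSup ((fun x => |τ * Real.log (Ψ x) - g x|) '' Set.Icc a b) := by
  set ζ := max (sSup (Ψ '' Icc a b)) (sSup ((fun x => exp (g x / τ)) '' Icc a b))
  set S := sSup ((fun x => |τ * log (Ψ x) - g x|) '' Icc a b)
  have hζ : 0 ≤ ζ := le_max_of_le_right <| Real.sSup_nonneg <| by
    rintro _ ⟨x, -, rfl⟩
    exact (exp_pos _).le
  have hS : 0 ≤ S := Real.sSup_nonneg <| by
    rintro _ ⟨x, -, rfl⟩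
    exact abs_nonneg _
  have hmax_le : ∀ x ∈ Icc a b, max (Ψ x) (exp (g x / τ)) ≤ ζ := fun x hx =>
    max_le_max (le_csSup (isCompact_Icc.bddAbove_image hΨc) (mem_image_of_mem _ hx))
      (le_csSup (isCompact_Icc.bddAbove_image (continuous_exp.comp_continuousOn
        (hgc.div_const τ))) (mem_image_of_mem _ hx))
  have hsup : sSup ((fun x => |Ψ x - exp (g x / τ)|) '' Icc a b) ≤ ζ / τ * S :=
    sSup_image_le_mul_sSup_image (by positivity)
      (isCompact_Icc.bddAbove_image (((continuousOn_const.mul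
        (hΨc.log fun x hx => (hΨpos x hx).ne')).sub hgc).abs))
      (fun _ _ => abs_nonneg _) fun x hx =>
        (abs_sub_exp_div_le (hΨpos x hx) hτ (g x)).trans (by gcongr; exact hmax_le x hx)
  calc τ / ζ * sSup ((fun x => |Ψ x - exp (g x / τ)|) '' Icc a b)
      ≤ τ / ζ * (ζ / τ * S) := by gcongr
    _ = ζ / ζ * S := by
        rw [← mul_assoc, div_mul_div_comm, mul_comm τ ζ, mul_div_mul_right _ _ hτ.ne']
    -- `ζ / ζ ≤ 1` also when `ζ = 0`, the junk case `τ / 0 = 0`.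
    _ ≤ S := mul_le_of_le_one_left hS (div_self_le_one ζ)

/-- Key comparison step for the approximation bound: for a positive
continuous function `Ψ` and a continuous target `g` on `[a,b]`, with
`ζ = max (sup Ψ) (sup (exp (g/τ)))`, the uniform error of `τ * log Ψ` against `g` is at
least `(τ/ζ)` times the uniform error of `Ψ` against `exp (g/τ)`. -/
theorem log_comparison_sup_bound
    (a b τ : ℝ) (hab : a < b) (hτ : 0 < τ)
    (Ψ g : ℝ → ℝ)
    (hΨc : ContinuousOn Ψ (Set.Icc a b))
    (hΨpos : ∀ x ∈ Set.Icc a b, 0 < Ψ x)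
    (hgc : ContinuousOn g (Set.Icc a b)) :
    (τ / max (sSup (Ψ '' Set.Icc a b))
        (sSup ((fun x => Real.exp (g x / τ)) '' Set.Icc a b))) *
      sSup ((fun x => |Ψ x - Real.exp (g x / τ)|) '' Set.Icc a b)
    ≤ sSup ((fun x => |τ * Real.log (Ψ x) - g x|) '' Set.Icc a b) :=
  log_comparison_sup_bound_general a b τ hτ Ψ g hΨc hΨpos hgc
end

section
/- For every natural number n, the n-th Catalan number satisfies (Nat.catalan n : ℝ) ≥ 4^n / ((n+1) · √(π · (n + 1/3))), where √ is the real square root and π is the real number pi. -/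
/-!
By Stirling's formula, `centralBinom n * √(n + c) / 4 ^ n → 1 / √π` for every shift `c`.
For `c = 1/3` the sequence is decreasing: the ratio of consecutive terms is
`(2n + 1) √(n + 4/3) / (2 (n + 1) √(n + 1/3))`, and
`(2n + 1)² (n + 4/3) = 4 (n + 1)² (n + 1/3) - n/3`.
A decreasing sequence lies above its limit, so `centralBinom n ≥ 4 ^ n / √(π (n + 1/3))`,
and `catalan n = centralBinom n / (n + 1)`.
-/

open Real Filter Topology Stirling

namespace Nat

theorem centralBinom_succ_mul_sqrt_le (n : ℕ) :
    (centralBinom (n + 1) : ℝ) * √(n + 1 + 1 / 3) ≤ 4 * centralBinom n * √(n + 1 / 3) := by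
  have hrec : ((n : ℝ) + 1) * centralBinom (n + 1) = 2 * (2 * n + 1) * centralBinom n := by
    exact_mod_cast succ_mul_centralBinom_succ n
  have hpoly : (2 * (n : ℝ) + 1) ^ 2 * (n + 1 + 1 / 3) ≤ (2 * (n + 1)) ^ 2 * (n + 1 / 3) := by
    nlinarith [(n.cast_nonneg : (0 : ℝ) ≤ n)]
  have hsqrt : (2 * (n : ℝ) + 1) * √(n + 1 + 1 / 3) ≤ 2 * (n + 1) * √(n + 1 / 3) := by
    rw [← Real.sqrt_sq (by positivity : (0 : ℝ) ≤ 2 * n + 1), ← Real.sqrt_mul (by positivity),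
      ← Real.sqrt_sq (by positivity : (0 : ℝ) ≤ 2 * (n + 1)), ← Real.sqrt_mul (by positivity)]
    exact Real.sqrt_le_sqrt hpoly
  refine le_of_mul_le_mul_left ?_ (by positivity : (0 : ℝ) < n + 1)
  calc ((n : ℝ) + 1) * (centralBinom (n + 1) * √(n + 1 + 1 / 3))
      = 2 * centralBinom n * ((2 * n + 1) * √(n + 1 + 1 / 3)) := by rw [← mul_assoc, hrec]; ring
    _ ≤ 2 * centralBinom n * (2 * (n + 1) * √(n + 1 / 3)) := by gcongr
    _ = (n + 1) * (4 * centralBinom n * √(n + 1 / 3)) := by ring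

theorem antitone_centralBinom_mul_sqrt_div_four_pow :
    Antitone fun n : ℕ ↦ (centralBinom n : ℝ) * √(n + 1 / 3) / 4 ^ n := by
  refine antitone_nat_of_succ_le fun n ↦ ?_
  rw [div_le_div_iff₀ (by positivity) (by positivity), pow_succ]
  push_cast
  linarith [mul_le_mul_of_nonneg_right (centralBinom_succ_mul_sqrt_le n)
    (by positivity : (0 : ℝ) ≤ 4 ^ n)]

theorem stirlingSeq_two_mul_div_sq (n : ℕ) (hn : n ≠ 0) :
    stirlingSeq (2 * n) / stirlingSeq n ^ 2 = centralBinom n * √n / 4 ^ n := by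
  have hfac : ((2 * n)! : ℝ) = centralBinom n * n ! * n ! := by
    have := choose_mul_factorial_mul_factorial (by omega : n ≤ 2 * n)
    rw [show 2 * n - n = n by omega, ← centralBinom_eq_two_mul_choose] at this
    exact_mod_cast this.symm
  have h4 : √(2 * ((2 * n : ℕ) : ℝ)) = 2 * √n := by
    rw [show 2 * ((2 * n : ℕ) : ℝ) = 2 ^ 2 * n by push_cast; ring, Real.sqrt_mul (by positivity),
      Real.sqrt_sq (by norm_num)]
  have h2 : √(2 * (n : ℝ)) ^ 2 = 2 * n := Real.sq_sqrt (by positivity)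
  have hs : √(n : ℝ) ^ 2 = n := Real.sq_sqrt (by positivity)
  simp only [stirlingSeq, h4, hfac, div_pow, mul_pow, h2]
  rw [Nat.cast_mul, Nat.cast_ofNat, mul_div_assoc, mul_pow, pow_mul, pow_mul, pow_mul]
  field_simp
  rw [hs]
  ring

theorem tendsto_centralBinom_mul_sqrt_div_four_pow :
    Tendsto (fun n : ℕ ↦ (centralBinom n : ℝ) * √n / 4 ^ n) atTop (𝓝 (√π)⁻¹) := by
  have hπ : √π ≠ 0 := (Real.sqrt_pos.mpr pi_pos).ne'
  have h := (tendsto_stirlingSeq_sqrt_pi.comp (tendsto_id.const_mul_atTop' two_pos)).div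
    (tendsto_stirlingSeq_sqrt_pi.pow 2) (pow_ne_zero 2 hπ)
  rw [sq, div_mul_cancel_left₀ hπ] at h
  refine h.congr' ?_
  filter_upwards [eventually_ne_atTop 0] with n hn
  exact stirlingSeq_two_mul_div_sq n hn

theorem tendsto_centralBinom_mul_sqrt_add_div_four_pow (c : ℝ) :
    Tendsto (fun n : ℕ ↦ (centralBinom n : ℝ) * √(n + c) / 4 ^ n) atTop (𝓝 (√π)⁻¹) := by
  have h : Tendsto (fun n : ℕ ↦ √(1 + c / n)) atTop (𝓝 1) := by
    simpa using ((tendsto_const_div_atTop_nhds_zero_nat c).const_add 1).sqrt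
  have := tendsto_centralBinom_mul_sqrt_div_four_pow.mul h
  rw [mul_one] at this
  refine this.congr' ?_
  filter_upwards [eventually_ne_atTop 0] with n hn
  rw [mul_div_right_comm, mul_assoc, ← Real.sqrt_mul n.cast_nonneg, mul_one_add,
    mul_div_cancel₀ c (by positivity), mul_div_right_comm]

theorem four_pow_div_sqrt_le_centralBinom (n : ℕ) :
    4 ^ n / √(π * (n + 1 / 3)) ≤ centralBinom n := by
  have h := antitone_centralBinom_mul_sqrt_div_four_pow.le_of_tendsto
    (tendsto_centralBinom_mul_sqrt_add_div_four_pow (1 / 3)) n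
  rw [Real.sqrt_mul pi_pos.le, div_le_iff₀ (by positivity)]
  rw [inv_le_iff_one_le_mul₀ (Real.sqrt_pos.mpr pi_pos), div_mul_eq_mul_div,
    one_le_div (by positivity)] at h
  linear_combination h

end Nat

/-- Lower bound for the Catalan numbers:
`catalan n ≥ 4^n / ((n+1) * √(π * (n + 1/3)))`. -/
theorem catalan_lower_bound (n : ℕ) :
    (catalan n : ℝ) ≥ 4 ^ n / ((n + 1) * Real.sqrt (Real.pi * (n + 1 / 3))) := by
  have hcat : (catalan n : ℝ) = Nat.centralBinom n / (n + 1) := by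
    rw [eq_div_iff (by positivity), mul_comm]
    exact_mod_cast succ_mul_catalan_eq_centralBinom n
  rw [ge_iff_le, hcat, mul_comm, ← div_div]
  gcongr
  exact Nat.four_pow_div_sqrt_le_centralBinom n
end

section
/- Let (Ω, 𝓕, P) be a probability space and (W_i)_{i≥1} a sequence of independent, identically distributed real-valued random variables whose common law μ is symmetric (μ is invariant under x ↦ −x) and atomless (has no atoms). Set S_k := ∑_{i=1}^k W_i. Then for every natural number n, P(S_1 < 0, S_2 < 0, …, S_n < 0, and S_{n+1} ≥ 0) = (Nat.catalan n) / 2^(2n+1), where Nat.catalan n is the n-th Catalan number. -/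
/-!
Let `q m = survivalProb μ m` be the probability that the walk stays negative for `m` steps.
Since `μ` has no atoms, almost surely the partial sums `S 0, …, S n` are pairwise distinct, so
exactly one time `k ≤ n` carries their strict maximum. That event is the intersection of
"the reversed and negated first `k` increments form a walk staying negative for `k` steps" and
"the increments after time `k` form a walk staying negative for `n - k` steps". The two are
independent, and by exchangeability and symmetry of `μ` they have probabilities `q k` and
`q (n - k)`. Hence `∑ k ≤ n, q k q (n - k) = 1`, i.e. the generating function of `q` squares to
`1 / (1 - x)`. So does that of `centralBinom m / 4 ^ m`, and a power series with nonzero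
constant term is determined by its square and that term, so `q m = centralBinom m / 4 ^ m`.
The first-passage probability is `q n - q (n + 1)`.
-/

open MeasureTheory ProbabilityTheory Finset
open scoped ENNReal

theorem Nat.sum_antidiagonal_centralBinom_mul (n : ℕ) :
    ∑ p ∈ antidiagonal n, p.1.centralBinom * p.2.centralBinom = 4 ^ n := by
  obtain ⟨T, hT⟩ : ∃ T : ℕ → ℕ,
      ∀ m, T m = ∑ p ∈ antidiagonal m, p.1.centralBinom * p.2.centralBinom :=
    ⟨_, fun _ => rfl⟩
  obtain ⟨U, hU⟩ : ∃ U : ℕ → ℕ,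
      ∀ m, U m = ∑ p ∈ antidiagonal m, p.1 * (p.1.centralBinom * p.2.centralBinom) :=
    ⟨_, fun _ => rfl⟩
  have two_mul_U (m : ℕ) : 2 * U m = m * T m := by
    calc 2 * U m
        = ∑ p ∈ antidiagonal m, (p.1 + p.2) * (p.1.centralBinom * p.2.centralBinom) := by
          rw [hU, two_mul]
          nth_rewrite 2 [← Nat.sum_antidiagonal_swap]
          rw [← sum_add_distrib]
          refine sum_congr rfl fun p _ => ?_
          simp only [Prod.fst_swap, Prod.snd_swap]
          ring
      _ = m * T m := by
          rw [hT, mul_sum]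
          exact sum_congr rfl fun p hp => by rw [mem_antidiagonal.mp hp]
  have U_succ (m : ℕ) : U (m + 1) = 4 * U m + 2 * T m := by
    rw [hU, hU, hT, Nat.sum_antidiagonal_succ, zero_mul, zero_add, mul_sum, mul_sum,
      ← sum_add_distrib]
    refine sum_congr rfl fun p _ => ?_
    rw [← mul_assoc, Nat.succ_mul_centralBinom_succ]
    ring
  induction n with
  | zero => simp
  | succ n ih =>
    rw [← hT] at ih ⊢
    refine Nat.eq_of_mul_eq_mul_left (Nat.succ_pos n) ?_
    calc (n + 1) * T (n + 1) = 2 * U (n + 1) := (two_mul_U _).symm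
      _ = 4 * (2 * U n) + 4 * T n := by rw [U_succ]; ring
      _ = (n + 1) * 4 ^ (n + 1) := by rw [two_mul_U, ih]; ring

lemma sum_antidiagonal_centralBinom_div_four_pow (n : ℕ) :
    ∑ p ∈ antidiagonal n,
      (p.1.centralBinom / 4 ^ p.1 : ℝ) * (p.2.centralBinom / 4 ^ p.2) = 1 := by
  have h := congrArg (Nat.cast (R := ℝ)) (Nat.sum_antidiagonal_centralBinom_mul n)
  push_cast at h
  calc ∑ p ∈ antidiagonal n, (p.1.centralBinom / 4 ^ p.1 : ℝ) * (p.2.centralBinom / 4 ^ p.2)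
      = ∑ p ∈ antidiagonal n, (p.1.centralBinom * p.2.centralBinom : ℝ) / 4 ^ n :=
        sum_congr rfl fun p hp => by rw [← mem_antidiagonal.mp hp, pow_add]; ring
    _ = 1 := by rw [← sum_div, h, div_self (by positivity)]

lemma centralBinom_div_four_pow_sub_succ (n : ℕ) :
    (n.centralBinom / 4 ^ n - (n + 1).centralBinom / 4 ^ (n + 1) : ℝ)
      = catalan n / 2 ^ (2 * n + 1) := by
  have hcat : ((n + 1) * catalan n : ℝ) = n.centralBinom := by
    exact_mod_cast succ_mul_catalan_eq_centralBinom n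
  have hrec : ((n + 1) * (n + 1).centralBinom : ℝ) = 2 * (2 * n + 1) * n.centralBinom := by
    exact_mod_cast Nat.succ_mul_centralBinom_succ n
  have hn : (n + 1 : ℝ) ≠ 0 := by positivity
  have h2 : (2 : ℝ) ^ (2 * n + 1) = 4 ^ n * 2 := by rw [pow_succ, pow_mul]; norm_num
  rw [h2, pow_succ]
  field_simp
  apply mul_left_cancel₀ hn
  linear_combination -2 * hrec - 4 * hcat

theorem PowerSeries.eq_of_sq_eq_sq {R : Type*} [CommRing R] [NoZeroDivisors R] [CharZero R]
    {f g : PowerSeries R} (h : f ^ 2 = g ^ 2) (h0 : constantCoeff f = constantCoeff g)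
    (hf : constantCoeff f ≠ 0) : f = g := by
  refine (sq_eq_sq_iff_eq_or_eq_neg.mp h).resolve_right fun hneg => hf ?_
  rw [hneg, map_neg] at h0 ⊢
  rw [neg_eq_zero]
  exact CharZero.neg_eq_self_iff.mp h0

lemma PowerSeries.sq_mk_eq_mk_one_iff {R : Type*} [CommSemiring R] (a : ℕ → R) :
    PowerSeries.mk a ^ 2 = PowerSeries.mk 1 ↔
      ∀ n, ∑ p ∈ antidiagonal n, a p.1 * a p.2 = 1 := by
  simp [PowerSeries.ext_iff, sq, PowerSeries.coeff_mul]

section Walk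

variable {Ω : Type*}

lemma sum_range_reflect_eq_sub {M : Type*} [AddCommGroup M] (x : ℕ → M) {r k : ℕ}
    (h : r ≤ k) :
    ∑ i ∈ range r, x (k - 1 - i) = ∑ i ∈ range k, x i - ∑ i ∈ range (k - r), x i := by
  have hsplit := sum_range_add x (k - r) r
  rw [Nat.sub_add_cancel h] at hsplit
  rw [hsplit, add_sub_cancel_left, ← sum_range_reflect]
  exact sum_congr rfl fun i hi => by rw [mem_range] at hi; congr 1; omega

def survivalEvent (X : ℕ → Ω → ℝ) (m : ℕ) : Set Ω :=
  {ω | ∀ k < m, ∑ i ∈ range (k + 1), X i ω < 0}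

def negativePaths (m : ℕ) : Set (Fin m → ℝ) := {x | ∀ k, ∑ i ∈ Iic k, x i < 0}

lemma survivalEvent_eq_preimage (X : ℕ → Ω → ℝ) (m : ℕ) :
    survivalEvent X m = (fun ω (i : Fin m) => X i ω) ⁻¹' negativePaths m := by
  ext ω
  simp only [survivalEvent, negativePaths, Set.mem_ofPred_eq, Set.mem_preimage, Fin.forall_iff]
  refine forall₂_congr fun k hk => ?_
  have hIic := Fin.map_valEmbedding_Iic (⟨k, hk⟩ : Fin m)
  rw [Nat.range_succ_eq_Iic, ← hIic, sum_map]
  rfl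

lemma measurableSet_negativePaths (m : ℕ) : MeasurableSet (negativePaths m) := by
  simp only [negativePaths, Set.ofPred_forall]
  exact .iInter fun k => measurableSet_lt (by fun_prop) measurable_const

lemma measurableSet_survivalEvent {mΩ : MeasurableSpace Ω} {X : ℕ → Ω → ℝ} {m : ℕ}
    (hX : ∀ i < m, Measurable (X i)) : MeasurableSet (survivalEvent X m) := by
  rw [survivalEvent_eq_preimage]
  exact measurable_pi_lambda _ (fun i : Fin m => hX i i.isLt) (measurableSet_negativePaths m)

lemma survivalEvent_succ_subset (X : ℕ → Ω → ℝ) (n : ℕ) :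
    survivalEvent X (n + 1) ⊆ survivalEvent X n :=
  fun _ hω k hk => hω k (Nat.lt_succ_of_lt hk)

lemma survivalEvent_diff_succ (X : ℕ → Ω → ℝ) (n : ℕ) :
    survivalEvent X n \ survivalEvent X (n + 1) = {ω | (∀ k, 1 ≤ k → k ≤ n →
      ∑ i ∈ range k, X i ω < 0) ∧ 0 ≤ ∑ i ∈ range (n + 1), X i ω} := by
  ext ω
  simp only [survivalEvent, Set.mem_sdiff, Set.mem_ofPred_eq, not_forall, not_lt, exists_prop]
  constructor
  · rintro ⟨hneg, k, hk, hnonneg⟩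
    obtain rfl : k = n := by_contra fun hkn => (hneg k (by omega)).not_ge hnonneg
    exact ⟨fun j hj1 hj2 => by simpa [Nat.sub_add_cancel hj1] using hneg (j - 1) (by omega),
      hnonneg⟩
  · rintro ⟨hneg, hnonneg⟩
    exact ⟨fun k hk => hneg (k + 1) (by omega) (by omega), n, n.lt_succ_self, hnonneg⟩

def strictMaxEvent (X : ℕ → Ω → ℝ) (n k : ℕ) : Set Ω :=
  {ω | ∀ i ≤ n, i ≠ k → ∑ j ∈ range i, X j ω < ∑ j ∈ range k, X j ω}

lemma strictMaxEvent_eq_inter (X : ℕ → Ω → ℝ) {n k : ℕ} (hk : k ≤ n) :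
    strictMaxEvent X n k =
      survivalEvent (fun i ω => -X (k - 1 - i) ω) k ∩
        survivalEvent (fun i => X (k + i)) (n - k) := by
  ext ω
  have before (r : ℕ) (hr : r < k) : ∑ i ∈ range (r + 1), -X (k - 1 - i) ω < 0 ↔
      ∑ j ∈ range (k - 1 - r), X j ω < ∑ j ∈ range k, X j ω := by
    rw [sum_neg_distrib, sum_range_reflect_eq_sub (X · ω) hr, neg_lt_zero, sub_pos,
      show k - (r + 1) = k - 1 - r by omega]
  have after (r : ℕ) : ∑ i ∈ range (r + 1), X (k + i) ω < 0 ↔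
      ∑ j ∈ range (k + r + 1), X j ω < ∑ j ∈ range k, X j ω := by
    rw [add_assoc, sum_range_add (X · ω) k, add_lt_iff_neg_left]
  simp only [strictMaxEvent, survivalEvent, Set.mem_inter_iff, Set.mem_ofPred_eq]
  constructor
  · intro h
    exact ⟨fun r hr => (before r hr).2 (h _ (by omega) (by omega)),
      fun r hr => (after r).2 (h _ (by omega) (by omega))⟩
  · rintro ⟨hbefore, hafter⟩ i hi hik
    rcases Nat.lt_or_gt_of_ne hik with hlt | hgt
    · simpa [show k - 1 - (k - 1 - i) = i by omega] using
        (before _ (by omega)).1 (hbefore (k - 1 - i) (by omega))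
    · simpa [show k + (i - k - 1) + 1 = i by omega] using
        (after _).1 (hafter (i - k - 1) (by omega))

lemma mem_biUnion_strictMaxEvent {X : ℕ → Ω → ℝ} {ω : Ω}
    (hω : Function.Injective fun k => ∑ i ∈ range k, X i ω) (n : ℕ) :
    ω ∈ ⋃ k ∈ range (n + 1), strictMaxEvent X n k := by
  obtain ⟨k, hk, hmax⟩ :=
    exists_max_image (range (n + 1)) (fun k => ∑ i ∈ range k, X i ω) nonempty_range_add_one
  exact Set.mem_biUnion hk fun i hi hik =>
    (hmax i (mem_range.2 (by omega))).lt_of_ne (hω.ne hik)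

variable [MeasurableSpace Ω] {P : Measure Ω}

lemma ProbabilityTheory.iIndepFun.map_comp_eq_pi {κ β : Type*} [MeasurableSpace β]
    {X : κ → Ω → β} {μ : Measure β} [SigmaFinite μ] (hX : ∀ i, Measurable (X i))
    (hlaw : ∀ i, P.map (X i) = μ)
    (hind : iIndepFun X P) {ι : Type*} [Fintype ι] {f : ι → κ} (hf : f.Injective) :
    P.map (fun ω i => X (f i) ω) = Measure.pi fun _ => μ := by
  rw [(hind.precomp hf).map_fun_eq_pi_map fun i => (hX (f i)).aemeasurable]
  simp only [hlaw]

lemma ProbabilityTheory.IndepFun.measure_eq_eq_zero [IsFiniteMeasure P] {β : Type*}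
    [MeasurableSpace β] [MeasurableEq β] {X Y : Ω → β} (hXY : IndepFun X Y P)
    (hX : Measurable X) (hY : Measurable Y) [NullSingletonClass (P.map X)] :
    P {ω | X ω = Y ω} = 0 := by
  have hmap := (indepFun_iff_map_prod_eq_prod_map_map hX.aemeasurable hY.aemeasurable).mp hXY
  have hdiag : {ω | X ω = Y ω} = (fun ω => (X ω, Y ω)) ⁻¹' Set.diagonal β := rfl
  rw [hdiag, ← Measure.map_apply (hX.prodMk hY) measurableSet_diagonal, hmap,
    Measure.prod_apply_symm measurableSet_diagonal]
  simp [Set.preimage, Set.diagonal]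

noncomputable def survivalProb (μ : Measure ℝ) [SigmaFinite μ] (m : ℕ) : ℝ≥0∞ :=
  Measure.pi (fun _ : Fin m => μ) (negativePaths m)

lemma survivalProb_zero (μ : Measure ℝ) [SigmaFinite μ] : survivalProb μ 0 = 1 := by
  simp [survivalProb, negativePaths]

lemma survivalProb_ne_top (μ : Measure ℝ) [IsProbabilityMeasure μ] (m : ℕ) :
    survivalProb μ m ≠ ∞ :=
  measure_ne_top _ _

lemma measure_survivalEvent_comp {μ : Measure ℝ} [SigmaFinite μ] {X : ℕ → Ω → ℝ}
    (hX : ∀ i, Measurable (X i)) (hlaw : ∀ i, P.map (X i) = μ) (hind : iIndepFun X P)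
    {g : ℕ → ℕ} {m : ℕ} (hg : Set.InjOn g (Set.Iio m)) :
    P (survivalEvent (fun i => X (g i)) m) = survivalProb μ m := by
  have hinj : (fun i : Fin m => g i).Injective := fun a b h => Fin.ext (hg a.isLt b.isLt h)
  rw [survivalEvent_eq_preimage, ← Measure.map_apply (measurable_pi_lambda _ fun i => hX _)
    (measurableSet_negativePaths m), hind.map_comp_eq_pi hX hlaw hinj, survivalProb]

lemma measure_strictMaxEvent {μ : Measure ℝ} [SigmaFinite μ]
    (hsym : μ.map (fun x => -x) = μ) {X : ℕ → Ω → ℝ} (hX : ∀ i, Measurable (X i))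
    (hlaw : ∀ i, P.map (X i) = μ) (hind : iIndepFun X P) {n k : ℕ} (hk : k ≤ n) :
    P (strictMaxEvent X n k) = survivalProb μ k * survivalProb μ (n - k) := by
  have hX_neg (i : ℕ) : Measurable fun ω => -X i ω := (hX i).neg
  have hlaw_neg (i : ℕ) : P.map (fun ω => -X i ω) = μ := by
    rw [← hsym, ← hlaw i, Measure.map_map measurable_neg (hX i)]
    rfl
  have hind_neg : iIndepFun (fun i ω => -X i ω) P :=
    hind.comp (fun _ x => -x) fun _ => measurable_neg
  have hpast_future : Indep (⨆ j ∈ Set.Iio k, (inferInstance : MeasurableSpace ℝ).comap (X j))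
      (⨆ j ∈ Set.Ici k, (inferInstance : MeasurableSpace ℝ).comap (X j)) P :=
    indep_iSup_of_disjoint (fun j => (hX j).comap_le) hind (Set.Iio_disjoint_Ici le_rfl)
  rw [strictMaxEvent_eq_inter X hk, (Indep_iff _ _ P).mp hpast_future _ _
    (measurableSet_survivalEvent (X := fun i ω => -X (k - 1 - i) ω) fun i hi =>
      (Measurable.of_comap_le (le_iSup₂_of_le (k - 1 - i) (by simp only [Set.mem_Iio]; omega)
        le_rfl)).neg)
    (measurableSet_survivalEvent fun i _ => Measurable.of_comap_le
      (le_iSup₂_of_le (k + i) (by simp) le_rfl)),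
    measure_survivalEvent_comp hX_neg hlaw_neg hind_neg (fun a ha b hb h => by
      simp only [Set.mem_Iio] at ha hb; omega),
    measure_survivalEvent_comp hX hlaw hind (fun a _ b _ h => Nat.add_left_cancel h)]

lemma ae_injective_partialSums [IsFiniteMeasure P] {μ : Measure ℝ} [NullSingletonClass μ]
    {X : ℕ → Ω → ℝ} (hX : ∀ i, Measurable (X i)) (hlaw : ∀ i, P.map (X i) = μ)
    (hind : iIndepFun X P) :
    ∀ᵐ ω ∂P, Function.Injective fun k => ∑ i ∈ range k, X i ω := by
  have hne (i j : ℕ) :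
      ∀ᵐ ω ∂P, i < j → ∑ l ∈ range i, X l ω ≠ ∑ l ∈ range j, X l ω := by
    refine Filter.eventually_imp_distrib_left.2 fun hij => ae_iff.2 ?_
    have : NullSingletonClass (P.map (X i)) := hlaw i ▸ inferInstance
    have hrest : IndepFun (X i) (fun ω => -∑ l ∈ Ico (i + 1) j, X l ω) P := by
      simpa [Function.comp_def, Finset.sum_apply] using
        (hind.indepFun_finsetSum_of_notMem hX (s := Ico (i + 1) j) (i := i) (by simp)).symm.comp
          measurable_id measurable_neg
    refine measure_mono_null (fun ω hω => ?_) (hrest.measure_eq_eq_zero (hX i) (by fun_prop))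
    have hsplit : ∑ l ∈ range j, X l ω =
        ∑ l ∈ range i, X l ω + (X i ω + ∑ l ∈ Ico (i + 1) j, X l ω) := by
      rw [← sum_eq_sum_Ico_succ_bot hij (X · ω), sum_range_add_sum_Ico _ hij.le]
    simp only [Set.mem_ofPred_eq, not_not] at hω
    simp only [Set.mem_ofPred_eq]
    linarith
  filter_upwards [ae_all_iff.2 fun i => ae_all_iff.2 (hne i)] with ω hω
  exact Function.Injective.of_lt_imp_ne hω

lemma sum_measure_strictMaxEvent [IsProbabilityMeasure P] {X : ℕ → Ω → ℝ}
    (hX : ∀ i, Measurable (X i))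
    (hinj : ∀ᵐ ω ∂P, Function.Injective fun k => ∑ i ∈ range k, X i ω) (n : ℕ) :
    ∑ k ∈ range (n + 1), P (strictMaxEvent X n k) = 1 := by
  have hdisj : (range (n + 1) : Set ℕ).PairwiseDisjoint (strictMaxEvent X n) := by
    intro k hk l hl hkl
    simp only [coe_range, Set.mem_Iio] at hk hl
    exact Set.disjoint_left.2 fun ω hωk hωl =>
      (hωk l (by omega) hkl.symm).asymm (hωl k (by omega) hkl)
  have hmeas (k : ℕ) (_ : k ∈ range (n + 1)) : MeasurableSet (strictMaxEvent X n k) := by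
    unfold strictMaxEvent
    measurability
  rw [← measure_biUnion_finset hdisj hmeas,
    ← prob_compl_eq_zero_iff (Finset.measurableSet_biUnion _ hmeas)]
  exact measure_mono_null (fun ω hω hinjω => hω (mem_biUnion_strictMaxEvent hinjω n))
    (ae_iff.1 hinj)

lemma sum_survivalProb_mul [IsProbabilityMeasure P] {μ : Measure ℝ} [SigmaFinite μ]
    [NullSingletonClass μ] (hsym : μ.map (fun x => -x) = μ)
    {X : ℕ → Ω → ℝ} (hX : ∀ i, Measurable (X i)) (hlaw : ∀ i, P.map (X i) = μ)
    (hind : iIndepFun X P) (n : ℕ) :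
    ∑ k ∈ range (n + 1), survivalProb μ k * survivalProb μ (n - k) = 1 := by
  rw [← sum_measure_strictMaxEvent hX (ae_injective_partialSums hX hlaw hind) n]
  exact sum_congr rfl fun k hk =>
    (measure_strictMaxEvent hsym hX hlaw hind (Nat.lt_succ_iff.1 (mem_range.1 hk))).symm

theorem survivalProb_eq_centralBinom_div [IsProbabilityMeasure P] {μ : Measure ℝ}
    [IsProbabilityMeasure μ] [NullSingletonClass μ]
    (hsym : μ.map (fun x => -x) = μ) {X : ℕ → Ω → ℝ} (hX : ∀ i, Measurable (X i))
    (hlaw : ∀ i, P.map (X i) = μ) (hind : iIndepFun X P) (n : ℕ) :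
    survivalProb μ n = ENNReal.ofReal (n.centralBinom / 4 ^ n) := by
  set q : ℕ → ℝ := fun m => (survivalProb μ m).toReal with hq
  have hq_sq : PowerSeries.mk q ^ 2 = PowerSeries.mk 1 := by
    refine (PowerSeries.sq_mk_eq_mk_one_iff q).2 fun m => ?_
    rw [Nat.sum_antidiagonal_eq_sum_range_succ (fun i j => q i * q j)]
    simp only [hq, ← ENNReal.toReal_mul, Nat.succ_eq_add_one]
    rw [← ENNReal.toReal_sum fun _ _ =>
        ENNReal.mul_ne_top (survivalProb_ne_top μ _) (survivalProb_ne_top μ _),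
      sum_survivalProb_mul hsym hX hlaw hind, ENNReal.toReal_one]
  have hc_sq := (PowerSeries.sq_mk_eq_mk_one_iff fun m => (m.centralBinom / 4 ^ m : ℝ)).2
    sum_antidiagonal_centralBinom_div_four_pow
  have hq_eq := PowerSeries.eq_of_sq_eq_sq (hq_sq.trans hc_sq.symm)
    (by simp [hq, survivalProb_zero]) (by simp [hq, survivalProb_zero])
  have hn := congrArg (PowerSeries.coeff n) hq_eq
  simp only [PowerSeries.coeff_mk, hq] at hn
  rw [← hn, ENNReal.ofReal_toReal (survivalProb_ne_top μ n)]

end Walk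

/-- **Sparre Andersen first-passage probability.** For a random walk
`S k = ∑_{i<k} W i` with iid increments whose common law `μ` is symmetric and atomless,
the probability that the walk stays strictly negative up to step `n` and is nonnegative at
step `n+1` equals `catalan n / 2^(2n+1)`. -/
theorem first_passage_probability_eq_catalan
    {Ω : Type*} [MeasurableSpace Ω] (P : Measure Ω) [IsProbabilityMeasure P]
    (μ : Measure ℝ) [NullSingletonClass μ]
    (hsym : μ.map (fun x => -x) = μ)
    (W : ℕ → Ω → ℝ)
    (hmeas : ∀ i, Measurable (W i))
    (hdist : ∀ i, P.map (W i) = μ)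
    (hindep : iIndepFun W P)
    (n : ℕ) :
    P {ω | (∀ k, 1 ≤ k → k ≤ n → (∑ i ∈ Finset.range k, W i ω) < 0) ∧
        0 ≤ ∑ i ∈ Finset.range (n + 1), W i ω}
      = ENNReal.ofReal ((catalan n : ℝ) / 2 ^ (2 * n + 1)) := by
  have : IsProbabilityMeasure μ :=
    hdist 0 ▸ Measure.isProbabilityMeasure_map (hmeas 0).aemeasurable
  have hsurvival (m : ℕ) : P (survivalEvent W m) = ENNReal.ofReal (m.centralBinom / 4 ^ m) :=
    (measure_survivalEvent_comp hmeas hdist hindep (g := fun i => i) (Set.injOn_id _)).trans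
      (survivalProb_eq_centralBinom_div hsym hmeas hdist hindep m)
  rw [← survivalEvent_diff_succ, measure_sdiff (survivalEvent_succ_subset W n)
    (measurableSet_survivalEvent fun i _ => hmeas i).nullMeasurableSet (measure_ne_top _ _),
    hsurvival, hsurvival, ← ENNReal.ofReal_sub _ (by positivity),
    centralBinom_div_four_pow_sub_succ]
end

section
/- Let (Ω, 𝓕, P) be a probability space and (W_i)_{i≥1} a sequence of independent, identically distributed real-valued random variables whose common law μ is symmetric (μ is invariant under x ↦ −x) and atomless (has no atoms). Set S_k := ∑_{i=1}^k W_i. Then for every natural number n, P(S_1 < 0, S_2 < 0, …, S_n < 0, and S_{n+1} ≥ 0) ≥ 1 / (2(n+1) · √(π · (n + 1/3))). -/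
/-!
Let `q m` be the probability that the first `m` partial sums of the walk are negative. Since `μ`
is atomless, the walk `S 0, …, S n` almost surely attains its minimum at a unique time `k`. Read
backwards from `k`, the first `k` increments form a walk that stays negative for `k` steps; read
forwards, the next `n - k` increments form a walk that stays positive. By independence and the
symmetry of `μ` this event has probability `q k * q (n - k)`, so `∑_{k + l = n} q k * q l = 1`.
Together with `q 0 = 1` this convolution equation forces `q m = (2m choose m) / 4 ^ m`. The
first-passage probability is `q n - q (n + 1) = q n / (2n + 2)`, and `π (n + 1/3) (q n) ^ 2`
decreases to `1` by Wallis' product.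
-/

open Finset Filter Topology Real MeasureTheory ProbabilityTheory
open Nat (centralBinom)

namespace Nat

theorem sum_antidiagonal_centralBinom_mul_centralBinom (n : ℕ) :
    ∑ p ∈ antidiagonal n, centralBinom p.1 * centralBinom p.2 = 4 ^ n := by
  set T := fun n => ∑ p ∈ antidiagonal n, centralBinom p.1 * centralBinom p.2
  -- by the symmetry `p ↦ p.swap`, the weight `p.2` averages to `n / 2`
  have weighted (n : ℕ) :
      2 * ∑ p ∈ antidiagonal n, p.2 * (centralBinom p.1 * centralBinom p.2) = n * T n := by
    rw [two_mul]
    nth_rw 1 [← Finset.Nat.sum_antidiagonal_swap]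
    rw [← sum_add_distrib, mul_sum]
    refine sum_congr rfl fun p hp => ?_
    rw [← mem_antidiagonal.mp hp]
    simp only [Prod.fst_swap, Prod.snd_swap]
    ring
  have step (n : ℕ) : T (n + 1) = 4 * T n := by
    refine Nat.eq_of_mul_eq_mul_left n.succ_pos ?_
    calc (n + 1) * T (n + 1)
        = 2 * ∑ p ∈ antidiagonal n,
            centralBinom p.1 * ((p.2 + 1) * centralBinom (p.2 + 1)) := by
          rw [← weighted, Finset.Nat.sum_antidiagonal_succ', zero_mul, zero_add]
          congr 1
          exact sum_congr rfl fun p _ => by ring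
      _ = 4 * (2 * ∑ p ∈ antidiagonal n, p.2 * (centralBinom p.1 * centralBinom p.2))
            + 4 * T n := by
          simp only [succ_mul_centralBinom_succ, mul_sum, T, ← sum_add_distrib]
          exact sum_congr rfl fun p _ => by ring
      _ = (n + 1) * (4 * T n) := by rw [weighted]; ring
  induction n with
  | zero => simp
  | succ n ih => rw [pow_succ, mul_comm, ← ih]; exact step n

end Nat

lemma sum_antidiagonal_centralBinom_div_four_pow_mul (n : ℕ) :
    ∑ p ∈ antidiagonal n, (centralBinom p.1 : ℝ) / 4 ^ p.1 * (centralBinom p.2 / 4 ^ p.2)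
      = 1 := by
  have h := Nat.sum_antidiagonal_centralBinom_mul_centralBinom n
  rw [← Nat.cast_inj (R := ℝ)] at h
  push_cast at h
  have hterm : ∀ p ∈ antidiagonal n,
      (centralBinom p.1 : ℝ) / 4 ^ p.1 * (centralBinom p.2 / 4 ^ p.2)
        = centralBinom p.1 * centralBinom p.2 / 4 ^ n := fun p hp => by
    rw [← HasAntidiagonal.mem_antidiagonal.mp hp, pow_add]
    field_simp
  rw [sum_congr rfl hterm, ← sum_div, h, div_self (by positivity)]

theorem eq_of_sum_antidiagonal_mul_self_eq {R : Type*} [CommRing R] [NoZeroDivisors R]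
    [CharZero R] {f g : ℕ → R} (hf : f 0 = 1) (hg : g 0 = 1)
    (h : ∀ n, ∑ p ∈ antidiagonal n, f p.1 * f p.2 = ∑ p ∈ antidiagonal n, g p.1 * g p.2) :
    f = g := by
  funext n
  induction n using Nat.strong_induction_on with
  | _ n ih =>
  cases n with
  | zero => rw [hf, hg]
  | succ n =>
    have hmem : (n, 0) ∈ antidiagonal n := by simp
    have interior : ∑ p ∈ (antidiagonal n).erase (n, 0), f (p.1 + 1) * f p.2
        = ∑ p ∈ (antidiagonal n).erase (n, 0), g (p.1 + 1) * g p.2 := by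
      refine sum_congr rfl fun p hp => ?_
      obtain ⟨hne, hp⟩ := mem_erase.mp hp
      rw [HasAntidiagonal.mem_antidiagonal] at hp
      have : p.2 ≠ 0 := fun h0 => hne (Prod.ext (by omega) h0)
      rw [ih (p.1 + 1) (by omega), ih p.2 (by omega)]
    have hn := h (n + 1)
    rw [Finset.Nat.sum_antidiagonal_succ, Finset.Nat.sum_antidiagonal_succ,
      ← add_sum_erase _ _ hmem, ← add_sum_erase _ _ hmem, interior, hf, hg] at hn
    have : (2 : R) * f (n + 1) = 2 * g (n + 1) := by linear_combination hn
    exact mul_left_cancel₀ two_ne_zero this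

lemma centralBinom_succ_div_four_pow (n : ℕ) :
    (centralBinom (n + 1) : ℝ) / 4 ^ (n + 1)
      = centralBinom n / 4 ^ n * ((2 * n + 1) / (2 * n + 2)) := by
  have h := Nat.succ_mul_centralBinom_succ n
  rw [← Nat.cast_inj (R := ℝ)] at h
  push_cast at h
  field_simp
  linear_combination 2 * 4 ^ n * h

lemma sq_centralBinom_div_four_pow_mul_W (n : ℕ) :
    ((centralBinom n : ℝ) / 4 ^ n) ^ 2 * ((2 * n + 1) * Wallis.W n) = 1 := by
  have h := Nat.choose_mul_factorial_mul_factorial (by omega : n ≤ 2 * n)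
  rw [two_mul, Nat.add_sub_cancel, ← two_mul, ← Nat.centralBinom_eq_two_mul_choose] at h
  rw [← Nat.cast_inj (R := ℝ)] at h
  push_cast at h
  have hc : (centralBinom n : ℝ) ≠ 0 := by exact_mod_cast Nat.centralBinom_ne_zero n
  have h4 : (2 : ℝ) ^ (4 * n) = (4 ^ n) ^ 2 := by
    rw [← pow_mul, show (4 : ℝ) = 2 ^ 2 by norm_num, ← pow_mul]
    ring_nf
  rw [Wallis.W_eq_factorial_ratio, ← h, h4]
  field_simp

lemma antitone_pi_mul_sq_centralBinom_div_four_pow :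
    Antitone fun n : ℕ => π * (n + 1 / 3) * ((centralBinom n : ℝ) / 4 ^ n) ^ 2 := by
  refine antitone_nat_of_succ_le fun n => ?_
  simp only [centralBinom_succ_div_four_pow]
  set a := (centralBinom n : ℝ) / 4 ^ n
  have hratio : ((n : ℝ) + 1 + 1 / 3) * ((2 * n + 1) / (2 * n + 2)) ^ 2 ≤ n + 1 / 3 := by
    rw [div_pow, mul_div_assoc', div_le_iff₀ (by positivity)]
    nlinarith [n.cast_nonneg (α := ℝ)]
  push_cast
  calc π * (n + 1 + 1 / 3) * (a * ((2 * n + 1) / (2 * n + 2))) ^ 2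
      = π * a ^ 2 * ((n + 1 + 1 / 3) * ((2 * n + 1) / (2 * n + 2)) ^ 2) := by ring
    _ ≤ π * a ^ 2 * (n + 1 / 3) := by gcongr
    _ = π * (n + 1 / 3) * a ^ 2 := by ring

lemma tendsto_pi_mul_sq_centralBinom_div_four_pow :
    Tendsto (fun n : ℕ => π * (n + 1 / 3) * ((centralBinom n : ℝ) / 4 ^ n) ^ 2) atTop
      (𝓝 1) := by
  have hW := Wallis.tendsto_W_nhds_pi_div_two
  have heq (n : ℕ) : π * (n + 1 / 3) * ((centralBinom n : ℝ) / 4 ^ n) ^ 2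
      = (π / 2 - π / 6 / (2 * n + 1)) / Wallis.W n := by
    have h := sq_centralBinom_div_four_pow_mul_W n
    set a := (centralBinom n : ℝ) / 4 ^ n
    rw [eq_div_iff (Wallis.W_pos n).ne']
    field_simp
    linear_combination 12 * (3 * n + 1) * h
  have hnum :
      Tendsto (fun n : ℕ => π / 2 - π / 6 / (2 * (n : ℝ) + 1)) atTop (𝓝 (π / 2)) := by
    have h0 : Tendsto (fun n : ℕ => π / 6 / (2 * (n : ℝ) + 1)) atTop (𝓝 0) :=
      tendsto_const_nhds.div_atTop <| tendsto_atTop_add_const_right _ _ <|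
        (tendsto_natCast_atTop_atTop (R := ℝ)).const_mul_atTop two_pos
    simpa using tendsto_const_nhds.sub h0
  have := hnum.div hW (by positivity)
  rw [div_self (by positivity)] at this
  exact this.congr fun n => (heq n).symm

theorem one_div_sqrt_le_centralBinom_div_four_pow (n : ℕ) :
    1 / √(π * (n + 1 / 3)) ≤ centralBinom n / 4 ^ n := by
  have h := antitone_pi_mul_sq_centralBinom_div_four_pow.le_of_tendsto
    tendsto_pi_mul_sq_centralBinom_div_four_pow n
  have hx : 0 < π * (n + 1 / 3) := by positivity
  rw [div_le_iff₀ (sqrt_pos.mpr hx),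
    ← abs_of_nonneg (by positivity : (0 : ℝ) ≤ centralBinom n / 4 ^ n), ← sqrt_sq_eq_abs,
    ← sqrt_mul' _ hx.le, mul_comm]
  exact one_le_sqrt.mpr h

section Tuples

variable {Ω ι β : Type*} [MeasurableSpace Ω] [MeasurableSpace β] {P : Measure Ω}
  [IsProbabilityMeasure P] {μ : Measure β} {X : ι → Ω → β}

lemma ProbabilityTheory.iIndepFun.map_tuple_eq_pi {κ : Type*} [Fintype κ]
    (hX : iIndepFun X P) (hmeas : ∀ i, Measurable (X i)) (hlaw : ∀ i, P.map (X i) = μ)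
    {f : κ → ι} (hf : f.Injective) :
    P.map (fun ω k => X (f k) ω) = Measure.pi fun _ => μ := by
  rw [(iIndepFun_iff_map_fun_eq_pi_map fun k => (hmeas (f k)).aemeasurable).mp (hX.precomp hf)]
  simp only [hlaw]

lemma ProbabilityTheory.iIndepFun.measure_tuple_mem_inter_tuple_mem [SigmaFinite μ]
    {κ κ' : Type*} [Fintype κ] [Fintype κ'] (hX : iIndepFun X P)
    (hmeas : ∀ i, Measurable (X i)) (hlaw : ∀ i, P.map (X i) = μ)
    {f : κ → ι} {g : κ' → ι} (hfg : (Sum.elim f g).Injective)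
    {A : Set (κ → β)} {B : Set (κ' → β)}
    (hA : MeasurableSet A) (hB : MeasurableSet B) :
    P ({ω | (fun k => X (f k) ω) ∈ A} ∩ {ω | (fun k => X (g k) ω) ∈ B})
      = Measure.pi (fun _ => μ) A * Measure.pi (fun _ => μ) B := by
  have hAB : MeasurableSet (MeasurableEquiv.sumPiEquivProdPi (fun _ => β) ⁻¹' A ×ˢ B) :=
    (MeasurableEquiv.sumPiEquivProdPi _).measurable (hA.prod hB)
  have hset : {ω | (fun k => X (f k) ω) ∈ A} ∩ {ω | (fun k => X (g k) ω) ∈ B}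
      = (fun ω j => X (Sum.elim f g j) ω) ⁻¹'
          (MeasurableEquiv.sumPiEquivProdPi (fun _ => β) ⁻¹' A ×ˢ B) := rfl
  rw [hset, ← Measure.map_apply (measurable_pi_lambda _ fun j => hmeas _) hAB,
    hX.map_tuple_eq_pi hmeas hlaw hfg,
    (measurePreserving_sumPiEquivProdPi fun _ => μ).measure_preimage
      (hA.prod hB).nullMeasurableSet,
    Measure.prod_prod]

end Tuples

lemma ProbabilityTheory.IndepFun.measure_setOf_eq_eq_zero {Ω β : Type*}
    [MeasurableSpace Ω] [MeasurableSpace β] [MeasurableEq β] {P : Measure Ω} [IsFiniteMeasure P]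
    {X Y : Ω → β} (hXY : IndepFun X Y P) (hX : Measurable X) (hY : Measurable Y)
    [NullSingletonClass (P.map X)] :
    P {ω | X ω = Y ω} = 0 := by
  have hpre : {ω | X ω = Y ω} = (fun ω => (X ω, Y ω)) ⁻¹' Set.diagonal β := rfl
  rw [hpre, ← Measure.map_apply (hX.prodMk hY) measurableSet_diagonal,
    (indepFun_iff_map_prod_eq_prod_map_map hX.aemeasurable hY.aemeasurable).mp hXY,
    Measure.prod_apply_symm measurableSet_diagonal]
  have hslice (y : β) : (fun x => (x, y)) ⁻¹' Set.diagonal β = {y} := by ext; simp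
  simp [hslice]

lemma MeasureTheory.Measure.pi_preimage_neg {ι : Type*} [Fintype ι] {μ : Measure ℝ}
    [SigmaFinite μ] (hsym : μ.map (fun x => -x) = μ) {A : Set (ι → ℝ)}
    (hA : MeasurableSet A) :
    Measure.pi (fun _ => μ) (Neg.neg ⁻¹' A) = Measure.pi (fun _ => μ) A := by
  rw [← Measure.map_apply measurable_neg hA]
  congr 1
  have : SigmaFinite (μ.map fun x => -x) := by rw [hsym]; infer_instance
  have := Measure.pi_map_pi (μ := fun _ : ι => μ) (f := fun _ x => -x)
    fun _ => measurable_neg.aemeasurable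
  simp only [hsym] at this
  exact this

def negPartialSums (m : ℕ) : Set (Fin m → ℝ) := {y | ∀ k : Fin m, ∑ i ∈ Iic k, y i < 0}

lemma measurableSet_negPartialSums (m : ℕ) : MeasurableSet (negPartialSums m) := by
  simp only [negPartialSums, Set.ofPred_forall]
  exact .iInter fun k =>
    measurableSet_lt (Finset.measurable_sum _ fun i _ => measurable_pi_apply i) measurable_const

lemma mem_negPartialSums_iff (g : ℕ → ℝ) {m : ℕ} :
    (fun i : Fin m => g i) ∈ negPartialSums m
      ↔ ∀ k, 1 ≤ k → k ≤ m → ∑ i ∈ range k, g i < 0 := by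
  have hsum (k : Fin m) : ∑ i ∈ Iic k, g i = ∑ i ∈ range (k + 1), g i := by
    rw [Nat.range_succ_eq_Iic, ← Fin.map_valEmbedding_Iic, sum_map]
    rfl
  simp only [negPartialSums, Set.mem_ofPred_eq, hsum]
  refine ⟨fun h k hk hkm => ?_, fun h k => h (k + 1) (by omega) k.isLt⟩
  obtain ⟨j, rfl⟩ := Nat.exists_eq_add_of_le' hk
  exact h ⟨j, by omega⟩

lemma sum_range_sub_one_sub {M : Type*} [AddCommGroup M] (x : ℕ → M) {j k : ℕ}
    (hjk : j ≤ k) :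
    ∑ i ∈ range j, x (k - 1 - i) = ∑ i ∈ range k, x i - ∑ i ∈ range (k - j), x i := by
  have hsplit := sum_range_add x (k - j) j
  rw [Nat.sub_add_cancel hjk] at hsplit
  rw [hsplit, add_sub_cancel_left, ← sum_range_reflect]
  refine sum_congr rfl fun i hi => ?_
  rw [mem_range] at hi
  congr 1
  omega

lemma reverse_mem_negPartialSums_iff (x : ℕ → ℝ) (k : ℕ) :
    (fun i : Fin k => x (k - 1 - i)) ∈ negPartialSums k
      ↔ ∀ j < k, ∑ i ∈ range k, x i < ∑ i ∈ range j, x i := by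
  rw [mem_negPartialSums_iff fun i => x (k - 1 - i)]
  refine ⟨fun h j hj => ?_, fun h j hj hjk => ?_⟩
  · have := h (k - j) (by omega) (by omega)
    rw [sum_range_sub_one_sub x (by omega), Nat.sub_sub_self hj.le] at this
    linarith
  · rw [sum_range_sub_one_sub x hjk]
    linarith [h (k - j) (by omega)]

lemma shift_mem_neg_preimage_negPartialSums_iff (x : ℕ → ℝ) (k l : ℕ) :
    (fun t : Fin l => x (k + t)) ∈ Neg.neg ⁻¹' negPartialSums l
      ↔ ∀ j, k < j → j ≤ k + l → ∑ i ∈ range k, x i < ∑ i ∈ range j, x i := by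
  rw [Set.mem_preimage, show -(fun t : Fin l => x (k + t)) = fun t : Fin l => -x (k + t)
    from rfl, mem_negPartialSums_iff fun t => -x (k + t)]
  simp only [sum_neg_distrib, neg_lt_zero]
  refine ⟨fun h j hkj hjl => ?_, fun h j hj hjl => ?_⟩
  · obtain ⟨t, rfl⟩ := Nat.exists_eq_add_of_lt hkj
    have := h (t + 1) (by omega) (by omega)
    rw [show k + t + 1 = k + (t + 1) by omega, sum_range_add]
    linarith
  · have := h (k + j) (by omega) (by omega)
    rw [sum_range_add] at this
    linarith

lemma setOf_partialSums_neg_eq_preimage {Ω : Type*} (W : ℕ → Ω → ℝ) (m : ℕ) :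
    {ω | ∀ k, 1 ≤ k → k ≤ m → ∑ i ∈ range k, W i ω < 0}
      = (fun ω (i : Fin m) => W i ω) ⁻¹' negPartialSums m := by
  ext ω
  exact (mem_negPartialSums_iff (W · ω)).symm

section StrictMin

variable {Ω : Type*} [MeasurableSpace Ω] {P : Measure Ω} [IsProbabilityMeasure P]

lemma sum_measure_strictMin_eq_one {S : Ω → ℕ → ℝ} (hS : ∀ j, Measurable (S · j))
    (hties : ∀ i j, i < j → P {ω | S ω i = S ω j} = 0) (n : ℕ) :
    ∑ k ∈ range (n + 1), P {ω | ∀ j ≤ n, j ≠ k → S ω k < S ω j} = 1 := by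
  set M := fun k => {ω | ∀ j ≤ n, j ≠ k → S ω k < S ω j}
  have hM (k : ℕ) : MeasurableSet (M k) := by
    simp only [M, Set.ofPred_forall]
    exact .iInter fun j => .iInter fun _ => .iInter fun _ => measurableSet_lt (hS k) (hS j)
  have hdisj : Set.PairwiseDisjoint ↑(range (n + 1)) M := by
    intro k hk l hl hkl
    simp only [coe_range, Set.mem_Iio] at hk hl
    exact Set.disjoint_left.mpr fun ω hωk hωl =>
      (hωk l (by omega) hkl.symm).asymm (hωl k (by omega) hkl)
  rw [← measure_biUnion_finset hdisj fun k _ => hM k]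
  refine (prob_compl_eq_zero_iff (measurableSet_biUnion _ fun k _ => hM k)).mp ?_
  refine measure_mono_null (t := ⋃ i, ⋃ j, ⋃ (_ : i < j), {ω | S ω i = S ω j}) ?_
    (measure_iUnion_null fun i => measure_iUnion_null fun j =>
      measure_iUnion_null fun hij => hties i j hij)
  intro ω hω
  obtain ⟨k, hk, hmin⟩ := exists_min_image (range (n + 1)) (S ω) nonempty_range_add_one
  simp only [Set.mem_compl_iff, Set.mem_iUnion, not_exists, M, Set.mem_ofPred_eq, not_forall,
    not_lt] at hω
  obtain ⟨j, hjn, hjk, hle⟩ := hω k hk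
  have heq : S ω k = S ω j := le_antisymm (hmin j (by simpa [Nat.lt_succ_iff] using hjn)) hle
  simp only [Set.mem_iUnion, Set.mem_ofPred_eq]
  rcases lt_or_gt_of_ne hjk with h | h
  · exact ⟨j, k, h, heq.symm⟩
  · exact ⟨k, j, h, heq⟩

end StrictMin

section RandomWalk

variable {Ω : Type*} [MeasurableSpace Ω] {P : Measure Ω} [IsProbabilityMeasure P]
  {μ : Measure ℝ} {W : ℕ → Ω → ℝ}

lemma measure_sum_range_eq_sum_range_eq_zero [NullSingletonClass μ]
    (hmeas : ∀ i, Measurable (W i)) (hdist : ∀ i, P.map (W i) = μ) (hindep : iIndepFun W P)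
    {i j : ℕ} (hij : i < j) :
    P {ω | ∑ l ∈ range i, W l ω = ∑ l ∈ range j, W l ω} = 0 := by
  set R := ∑ l ∈ Ico (i + 1) j, W l
  have hR : Measurable R := by simp only [R]; fun_prop
  have hind : IndepFun (W i) (-R) P :=
    (hindep.indepFun_finsetSum_of_notMem hmeas (by simp)).symm.comp measurable_id measurable_neg
  have : NullSingletonClass (P.map (W i)) := by rw [hdist]; infer_instance
  have hset :
      {ω | ∑ l ∈ range i, W l ω = ∑ l ∈ range j, W l ω} = {ω | W i ω = (-R) ω} := by
    ext ω
    simp only [Set.mem_ofPred_eq, Pi.neg_apply, R, Finset.sum_apply]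
    rw [← sum_range_add_sum_Ico _ hij, sum_range_succ]
    constructor <;> intro h <;> linarith
  rw [hset]
  exact hind.measure_setOf_eq_eq_zero (hmeas i) hR.neg

lemma measure_strictMin_eq_mul [IsProbabilityMeasure μ] (hsym : μ.map (fun x => -x) = μ)
    (hmeas : ∀ i, Measurable (W i)) (hdist : ∀ i, P.map (W i) = μ) (hindep : iIndepFun W P)
    {n k : ℕ} (hk : k ≤ n) :
    P {ω | ∀ j ≤ n, j ≠ k → ∑ i ∈ range k, W i ω < ∑ i ∈ range j, W i ω}
      = Measure.pi (fun _ => μ) (negPartialSums k)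
        * Measure.pi (fun _ => μ) (negPartialSums (n - k)) := by
  have hset : {ω | ∀ j ≤ n, j ≠ k → ∑ i ∈ range k, W i ω < ∑ i ∈ range j, W i ω}
      = {ω | (fun i : Fin k => W (k - 1 - i) ω) ∈ negPartialSums k}
        ∩ {ω | (fun t : Fin (n - k) => W (k + t) ω)
            ∈ Neg.neg ⁻¹' negPartialSums (n - k)} := by
    ext ω
    simp only [Set.mem_inter_iff, Set.mem_ofPred_eq, reverse_mem_negPartialSums_iff (W · ω),
      shift_mem_neg_preimage_negPartialSums_iff (W · ω), Nat.add_sub_cancel' hk]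
    refine ⟨fun h => ⟨fun j hj => h j (by omega) (by omega),
      fun j hj hjn => h j hjn (by omega)⟩, fun ⟨hlt, hgt⟩ j hjn hjk => ?_⟩
    rcases lt_or_gt_of_ne hjk with h | h
    · exact hlt j h
    · exact hgt j h hjn
  have hinj : (Sum.elim (fun i : Fin k => k - 1 - i) fun t : Fin (n - k) => k + t).Injective :=
    Function.Injective.sumElim (fun a b h => Fin.ext (by omega))
      (fun a b h => Fin.ext (by omega)) fun a b => by omega
  rw [hset, hindep.measure_tuple_mem_inter_tuple_mem hmeas hdist hinj
    (measurableSet_negPartialSums k) ((measurableSet_negPartialSums _).preimage measurable_neg),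
    Measure.pi_preimage_neg hsym (measurableSet_negPartialSums _)]

lemma sum_antidiagonal_measure_negPartialSums_mul [IsProbabilityMeasure μ]
    [NullSingletonClass μ] (hsym : μ.map (fun x => -x) = μ) (hmeas : ∀ i, Measurable (W i))
    (hdist : ∀ i, P.map (W i) = μ) (hindep : iIndepFun W P) (n : ℕ) :
    ∑ p ∈ antidiagonal n, (Measure.pi (fun _ => μ) (negPartialSums p.1)).toReal
      * (Measure.pi (fun _ => μ) (negPartialSums p.2)).toReal = 1 := by
  have hpart := sum_measure_strictMin_eq_one (P := P) (S := fun ω j => ∑ i ∈ range j, W i ω)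
    (fun j => Finset.measurable_sum _ fun i _ => hmeas i)
    (fun i j hij => measure_sum_range_eq_sum_range_eq_zero hmeas hdist hindep hij) n
  rw [sum_congr rfl fun k hk =>
    measure_strictMin_eq_mul hsym hmeas hdist hindep (mem_range_succ_iff.mp hk)] at hpart
  rw [Finset.Nat.sum_antidiagonal_eq_sum_range_succ_mk]
  have := congrArg ENNReal.toReal hpart
  rw [ENNReal.toReal_sum fun k _ => ENNReal.mul_ne_top (measure_ne_top _ _)
    (measure_ne_top _ _), ENNReal.toReal_one] at this
  simpa only [ENNReal.toReal_mul] using this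

theorem measure_partialSums_neg_eq_centralBinom_div_four_pow [IsProbabilityMeasure μ]
    [NullSingletonClass μ] (hsym : μ.map (fun x => -x) = μ) (hmeas : ∀ i, Measurable (W i))
    (hdist : ∀ i, P.map (W i) = μ) (hindep : iIndepFun W P) (m : ℕ) :
    P {ω | ∀ k, 1 ≤ k → k ≤ m → ∑ i ∈ range k, W i ω < 0}
      = ENNReal.ofReal (centralBinom m / 4 ^ m) := by
  have hq : (fun m => (Measure.pi (fun _ => μ) (negPartialSums m)).toReal)
      = fun m => (centralBinom m : ℝ) / 4 ^ m :=
    eq_of_sum_antidiagonal_mul_self_eq (by simp [negPartialSums]) (by simp)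
      fun n => by rw [sum_antidiagonal_measure_negPartialSums_mul hsym hmeas hdist hindep,
        sum_antidiagonal_centralBinom_div_four_pow_mul]
  rw [setOf_partialSums_neg_eq_preimage, ← Measure.map_apply (f := fun ω (i : Fin m) => W i ω)
      (measurable_pi_lambda _ fun i => hmeas i) (measurableSet_negPartialSums m),
    hindep.map_tuple_eq_pi hmeas hdist Fin.val_injective, ← congrFun hq m,
    ENNReal.ofReal_toReal (measure_ne_top _ _)]

theorem measure_firstPassage_eq [IsProbabilityMeasure μ] [NullSingletonClass μ]
    (hsym : μ.map (fun x => -x) = μ) (hmeas : ∀ i, Measurable (W i))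
    (hdist : ∀ i, P.map (W i) = μ) (hindep : iIndepFun W P) (n : ℕ) :
    P {ω | (∀ k, 1 ≤ k → k ≤ n → ∑ i ∈ range k, W i ω < 0) ∧
        0 ≤ ∑ i ∈ range (n + 1), W i ω}
      = ENNReal.ofReal (centralBinom n / 4 ^ n / (2 * n + 2)) := by
  set A := fun m => {ω | ∀ k, 1 ≤ k → k ≤ m → ∑ i ∈ range k, W i ω < 0}
  have hevent : {ω | (∀ k, 1 ≤ k → k ≤ n → ∑ i ∈ range k, W i ω < 0) ∧
      0 ≤ ∑ i ∈ range (n + 1), W i ω} = A n \ A (n + 1) := by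
    ext ω
    simp only [A, Set.mem_sdiff, Set.mem_ofPred_eq, not_forall, not_lt]
    refine ⟨fun ⟨h, h'⟩ => ⟨h, n + 1, by omega, le_rfl, h'⟩,
      fun ⟨h, k, hk, hkn, h'⟩ => ⟨h, ?_⟩⟩
    rcases Nat.lt_or_ge k (n + 1) with hlt | hge
    · exact absurd (h k hk (by omega)) h'.not_gt
    · rwa [show k = n + 1 by omega] at h'
  have hsub : A (n + 1) ⊆ A n := fun ω h k hk hkn => h k hk (by omega)
  have hmeasA : MeasurableSet (A (n + 1)) := by
    simp only [A, setOf_partialSums_neg_eq_preimage]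
    exact measurable_pi_lambda (fun ω (i : Fin (n + 1)) => W i ω) (fun i => hmeas i)
      (measurableSet_negPartialSums _)
  rw [hevent, measure_sdiff hsub hmeasA.nullMeasurableSet (measure_ne_top _ _),
    measure_partialSums_neg_eq_centralBinom_div_four_pow hsym hmeas hdist hindep,
    measure_partialSums_neg_eq_centralBinom_div_four_pow hsym hmeas hdist hindep,
    ← ENNReal.ofReal_sub _ (by positivity), centralBinom_succ_div_four_pow]
  congr 1
  field_simp
  ring

end RandomWalk

/-- For a random walk `S k = ∑_{i<k} W i` with iid increments whose common
law `μ` is symmetric and atomless, the first-passage probability at step `n+1` (staying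
strictly negative up to step `n` and being nonnegative at step `n+1`) is at least
`1 / (2(n+1)·√(π(n+1/3)))`. -/
theorem first_passage_probability_lower_bound
    {Ω : Type*} [MeasurableSpace Ω] (P : Measure Ω) [IsProbabilityMeasure P]
    (μ : Measure ℝ) [NullSingletonClass μ]
    (hsym : μ.map (fun x => -x) = μ)
    (W : ℕ → Ω → ℝ)
    (hmeas : ∀ i, Measurable (W i))
    (hdist : ∀ i, P.map (W i) = μ)
    (hindep : iIndepFun W P)
    (n : ℕ) :
    P {ω | (∀ k, 1 ≤ k → k ≤ n → (∑ i ∈ Finset.range k, W i ω) < 0) ∧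
        0 ≤ ∑ i ∈ Finset.range (n + 1), W i ω}
      ≥ ENNReal.ofReal (1 / (2 * (n + 1) * Real.sqrt (Real.pi * (n + 1 / 3)))) := by
  have : IsProbabilityMeasure μ :=
    hdist 0 ▸ Measure.isProbabilityMeasure_map (hmeas 0).aemeasurable
  rw [ge_iff_le, measure_firstPassage_eq hsym hmeas hdist hindep]
  refine ENNReal.ofReal_le_ofReal ?_
  calc 1 / (2 * (n + 1) * √(π * (n + 1 / 3)))
      = 1 / √(π * (n + 1 / 3)) / (2 * n + 2) := by field_simp
    _ ≤ centralBinom n / 4 ^ n / (2 * n + 2) :=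
      div_le_div_of_nonneg_right (one_div_sqrt_le_centralBinom_div_four_pow n) (by positivity)
end

section
/- Let (Ω, 𝓕, P) be a probability space and (W_i)_{i≥1} a sequence of independent, identically distributed real-valued random variables whose common law μ is symmetric (μ is invariant under x ↦ −x) and atomless (has no atoms). Set S_k := ∑_{i=1}^k W_i. Then for every natural number N ≥ 1, ∑_{k=1}^N (Nat.choose N k) · P(S_k ≥ 0) ≥ (2^N − 1) / (2N · √(π · (N − 2/3))). -/
/-!
By independence, the law of `S_k` is the convolution of the laws of `W_0, …, W_{k-1}`, and a
convolution of symmetric laws is symmetric. For a symmetric law, `[0, ∞)` and `(-∞, 0]` have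
equal mass and together cover `ℝ`, so `P(S_k ≥ 0) ≥ 1/2`. Summing with binomial weights gives
at least `(2^N - 1)/2`, and the claimed bound is smaller since `2N·√(π(N - 2/3)) ≥ 2`.
-/

open MeasureTheory ProbabilityTheory Finset

lemma MeasureTheory.Measure.map_neg_conv_eq_self {G : Type*} [AddCommGroup G] [MeasurableSpace G]
    [MeasurableAdd₂ G] [MeasurableNeg G] {μ ν : Measure G} [SFinite μ] [SFinite ν]
    (hμ : μ.map (fun x => -x) = μ) (hν : ν.map (fun x => -x) = ν) :
    (μ ∗ ν).map (fun x => -x) = μ ∗ ν := by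
  simpa [hμ, hν] using map_conv_addMonoidHom (μ := μ) (ν := ν) negAddMonoidHom measurable_neg

lemma ProbabilityTheory.iIndepFun.map_neg_map_sum_range_eq_self {Ω G : Type*}
    [MeasurableSpace Ω] {P : Measure Ω} [IsFiniteMeasure P] [AddCommGroup G] [MeasurableSpace G]
    [MeasurableAdd₂ G] [MeasurableNeg G] {W : ℕ → Ω → G} (hindep : iIndepFun W P)
    (hmeas : ∀ i, Measurable (W i)) (hsym : ∀ i, (P.map (W i)).map (fun x => -x) = P.map (W i))
    (k : ℕ) :
    (P.map (∑ i ∈ range k, W i)).map (fun x => -x) = P.map (∑ i ∈ range k, W i) := by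
  induction k with
  | zero =>
    rw [sum_range_zero, Pi.zero_def, Measure.map_const, Measure.map_smul,
      Measure.map_dirac' measurable_neg, neg_zero]
  | succ n ih =>
    rw [sum_range_succ, (hindep.indepFun_sum_range_succ hmeas n).map_add_eq_map_conv_map
      (by fun_prop) (hmeas n)]
    exact Measure.map_neg_conv_eq_self ih (hsym n)

lemma MeasureTheory.Measure.half_le_measureReal_Ici_zero_of_map_neg_eq_self {μ : Measure ℝ}
    [IsProbabilityMeasure μ] (hμ : μ.map (fun x => -x) = μ) : 1 / 2 ≤ μ.real (Set.Ici 0) := by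
  have h_refl : μ.real (Set.Iic 0) = μ.real (Set.Ici 0) := by
    rw [← hμ, map_measureReal_apply measurable_neg measurableSet_Ici, hμ]
    congr 1; ext x; simp
  have h_cover : 1 ≤ μ.real (Set.Iic 0) + μ.real (Set.Ici 0) := by
    simpa [Set.Iic_union_Ici] using measureReal_union_le (μ := μ) (Set.Iic (0 : ℝ)) (Set.Ici 0)
  linarith

lemma Nat.sum_Icc_one_choose (n : ℕ) : ∑ k ∈ Icc 1 n, (n.choose k : ℝ) = 2 ^ n - 1 := by
  have h := Nat.sum_range_choose n
  rw [range_eq_Ico, sum_eq_sum_Ico_succ_bot n.succ_pos, zero_add, Nat.succ_eq_add_one,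
    Ico_add_one_right_eq_Icc, Nat.choose_zero_right] at h
  rw [eq_sub_iff_add_eq, add_comm]
  exact_mod_cast h

theorem causal_pieces_lower_bound_general
    {Ω : Type*} [MeasurableSpace Ω] (P : Measure Ω) [IsProbabilityMeasure P]
    (μ : Measure ℝ)
    (hsym : μ.map (fun x => -x) = μ)
    (W : ℕ → Ω → ℝ)
    (hmeas : ∀ i, Measurable (W i))
    (hdist : ∀ i, P.map (W i) = μ)
    (hindep : iIndepFun W P)
    (N : ℕ) (hN : 1 ≤ N) :
    ∑ k ∈ Finset.Icc 1 N, (Nat.choose N k : ℝ) *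
        (P {ω | 0 ≤ ∑ i ∈ Finset.range k, W i ω}).toReal
      ≥ (2 ^ N - 1) / (2 * N * Real.sqrt (Real.pi * (N - 2 / 3))) := by
  have h_half (k : ℕ) : 1 / 2 ≤ (P {ω | 0 ≤ ∑ i ∈ range k, W i ω}).toReal := by
    have hS : Measurable (∑ i ∈ range k, W i) := by fun_prop
    have := Measure.isProbabilityMeasure_map (μ := P) hS.aemeasurable
    have h_sum_sym := hindep.map_neg_map_sum_range_eq_self hmeas (fun i => hdist i ▸ hsym) k
    simpa [map_measureReal_apply hS measurableSet_Ici, Set.preimage, measureReal_def]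
      using Measure.half_le_measureReal_Ici_zero_of_map_neg_eq_self h_sum_sym
  have h_denom : 2 ≤ 2 * N * √(Real.pi * (N - 2 / 3)) := by
    have hN_real : (1 : ℝ) ≤ N := by exact_mod_cast hN
    have : 1 ≤ √(Real.pi * (N - 2 / 3)) :=
      Real.one_le_sqrt.mpr (by nlinarith [Real.pi_gt_three])
    nlinarith
  calc ∑ k ∈ Icc 1 N, (N.choose k : ℝ) * (P {ω | 0 ≤ ∑ i ∈ range k, W i ω}).toReal
      ≥ ∑ k ∈ Icc 1 N, (N.choose k : ℝ) * (1 / 2) :=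
        sum_le_sum fun k _ => mul_le_mul_of_nonneg_left (h_half k) (Nat.cast_nonneg _)
    _ = (2 ^ N - 1) / 2 := by rw [← sum_mul, Nat.sum_Icc_one_choose]; ring
    _ ≥ _ := div_le_div_of_nonneg_left (by simp [one_le_pow₀]) two_pos h_denom

/-- **Theorem 3 of the paper, number of causal pieces in the limit.**
For iid increments `W i` with symmetric atomless common law `μ`, the expected number of
causal pieces `∑_{k=1}^N C(N,k) · P(S_k ≥ 0)` of a single nLIF neuron with `N` inputs is
at least `(2^N - 1) / (2N·√(π(N - 2/3)))`. -/
theorem causal_pieces_lower_bound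
    {Ω : Type*} [MeasurableSpace Ω] (P : Measure Ω) [IsProbabilityMeasure P]
    (μ : Measure ℝ) [NullSingletonClass μ]
    (hsym : μ.map (fun x => -x) = μ)
    (W : ℕ → Ω → ℝ)
    (hmeas : ∀ i, Measurable (W i))
    (hdist : ∀ i, P.map (W i) = μ)
    (hindep : iIndepFun W P)
    (N : ℕ) (hN : 1 ≤ N) :
    ∑ k ∈ Finset.Icc 1 N, (Nat.choose N k : ℝ) *
        (P {ω | 0 ≤ ∑ i ∈ Finset.range k, W i ω}).toReal
      ≥ (2 ^ N - 1) / (2 * N * Real.sqrt (Real.pi * (N - 2 / 3))) :=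
  causal_pieces_lower_bound_general P μ hsym W hmeas hdist hindep N hN
end

section
/- Let ℓ ≥ 1 be a natural number, let N_1, …, N_ℓ be natural numbers with N_n ≥ 1, and for each n ∈ {1,…,ℓ} and each r ∈ {1,…,N_n} let p^{(n)}_r be a real number with 0 ≤ p^{(n)}_r ≤ 1. Define a real sequence by η_0 := 1 and η_n := ∑_{r=1}^{N_n} (Nat.choose N_n r) · p^{(n)}_r · (η_{n−1})^r for n = 1, …, ℓ. Then η_ℓ ≤ 2^(N_1 · N_2 · ⋯ · N_ℓ) − 1; in particular, η_ℓ ≤ 2^(N^ℓ) where N := max{N_1, …, N_ℓ}. -/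
/-!
Since `0 ≤ p ≤ 1`, each layer satisfies `η n ≤ ∑_{r ≥ 1} C(N n, r) η_{n-1}^r = (η_{n-1} + 1)^(N n) - 1`
by the binomial theorem, so `η n + 1 ≤ (η_{n-1} + 1)^(N n)`. Iterating from `η 0 + 1 = 2` gives
`η ℓ + 1 ≤ 2^(N 1 ⋯ N ℓ)`, and `N 1 ⋯ N ℓ ≤ (max N)^ℓ`.
-/

open Finset

theorem add_one_pow_eq_one_add_sum_Icc_choose {R : Type*} [CommSemiring R] (x : R) (n : ℕ) :
    (x + 1) ^ n = 1 + ∑ r ∈ Icc 1 n, (n.choose r : R) * x ^ r := by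
  rw [add_pow, Nat.range_succ_eq_Icc_zero, ← insert_Icc_add_one_left_eq_Icc n.zero_le,
    sum_insert (by simp)]
  simp [mul_comm]

theorem sum_Icc_choose_mul_mul_pow_mem_Icc {R : Type*} [CommRing R] [LinearOrder R]
    [IsStrictOrderedRing R] {x : R} (hx : 0 ≤ x) (n : ℕ) (q : ℕ → R)
    (hq : ∀ r ∈ Icc 1 n, 0 ≤ q r ∧ q r ≤ 1) :
    0 ≤ ∑ r ∈ Icc 1 n, (n.choose r : R) * q r * x ^ r ∧
      ∑ r ∈ Icc 1 n, (n.choose r : R) * q r * x ^ r ≤ (x + 1) ^ n - 1 := by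
  constructor
  · exact sum_nonneg fun r hr ↦ by have := (hq r hr).1; positivity
  · calc ∑ r ∈ Icc 1 n, (n.choose r : R) * q r * x ^ r
        ≤ ∑ r ∈ Icc 1 n, (n.choose r : R) * x ^ r := by
          gcongr with r hr
          exact mul_le_of_le_one_right (Nat.cast_nonneg _) (hq r hr).2
      _ = (x + 1) ^ n - 1 := by rw [add_one_pow_eq_one_add_sum_Icc_choose]; ring

theorem pieces_nonneg_and_le_two_pow_prod_sub_one (ℓ : ℕ) (N : ℕ → ℕ) (p : ℕ → ℕ → ℝ)
    (hp : ∀ n r, 1 ≤ n → n ≤ ℓ → 1 ≤ r → r ≤ N n → 0 ≤ p n r ∧ p n r ≤ 1)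
    (η : ℕ → ℝ) (hη0 : η 0 = 1)
    (hηrec : ∀ n, 1 ≤ n → n ≤ ℓ →
      η n = ∑ r ∈ Icc 1 (N n), (Nat.choose (N n) r : ℝ) * p n r * (η (n - 1)) ^ r)
    {n : ℕ} (hn : n ≤ ℓ) :
    0 ≤ η n ∧ η n ≤ 2 ^ (∏ i ∈ Icc 1 n, N i) - 1 := by
  induction n with
  | zero => norm_num [hη0]
  | succ m ih =>
    obtain ⟨hm_nonneg, hm_le⟩ := ih (by omega)
    have hrec := hηrec (m + 1) (by omega) hn
    rw [Nat.add_sub_cancel] at hrec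
    obtain ⟨h_nonneg, h_le⟩ := sum_Icc_choose_mul_mul_pow_mem_Icc hm_nonneg (N (m + 1)) (p (m + 1))
      fun r hr ↦ hp (m + 1) r (by omega) hn (mem_Icc.1 hr).1 (mem_Icc.1 hr).2
    rw [← hrec] at h_nonneg h_le
    refine ⟨h_nonneg, h_le.trans ?_⟩
    calc (η m + 1) ^ N (m + 1) - 1
        ≤ ((2 : ℝ) ^ ∏ i ∈ Icc 1 m, N i) ^ N (m + 1) - 1 := by
          gcongr
          linarith
      _ = 2 ^ ∏ i ∈ Icc 1 (m + 1), N i - 1 := by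
          rw [prod_Icc_succ_top (by omega), pow_mul]

theorem deep_nLIF_pieces_upper_bound_general
    (ℓ : ℕ) (N : ℕ → ℕ)
    (p : ℕ → ℕ → ℝ)
    (hp : ∀ n r, 1 ≤ n → n ≤ ℓ → 1 ≤ r → r ≤ N n → 0 ≤ p n r ∧ p n r ≤ 1)
    (η : ℕ → ℝ) (hη0 : η 0 = 1)
    (hηrec : ∀ n, 1 ≤ n → n ≤ ℓ →
      η n = ∑ r ∈ Finset.Icc 1 (N n), (Nat.choose (N n) r : ℝ) * p n r * (η (n - 1)) ^ r) :
    η ℓ ≤ 2 ^ (∏ n ∈ Finset.Icc 1 ℓ, N n) - 1 ∧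
    η ℓ ≤ 2 ^ (((Finset.Icc 1 ℓ).sup N) ^ ℓ) := by
  have h_prod := (pieces_nonneg_and_le_two_pow_prod_sub_one ℓ N p hp η hη0 hηrec le_rfl).2
  refine ⟨h_prod, h_prod.trans ?_⟩
  have h_exp : ∏ n ∈ Icc 1 ℓ, N n ≤ (Icc 1 ℓ).sup N ^ ℓ := by
    simpa using prod_le_pow_card (Icc 1 ℓ) N _ fun n hn ↦ le_sup hn
  calc (2 : ℝ) ^ (∏ n ∈ Icc 1 ℓ, N n) - 1 ≤ 2 ^ (∏ n ∈ Icc 1 ℓ, N n) := by linarith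
    _ ≤ 2 ^ ((Icc 1 ℓ).sup N ^ ℓ) := pow_le_pow_right₀ one_le_two h_exp

/-- Upper bound on the recursion counting causal pieces of deep nLIF
networks: if `η 0 = 1` and `η n = ∑_{r=1}^{N n} C(N n, r) · p n r · (η (n-1))^r` for
probabilities `p n r ∈ [0,1]`, then `η ℓ ≤ 2^(N 1 ⋯ N ℓ) - 1`; in particular
`η ℓ ≤ 2^(Nmax^ℓ)` where `Nmax = max {N 1, …, N ℓ}`. -/
theorem deep_nLIF_pieces_upper_bound
    (ℓ : ℕ) (hℓ : 1 ≤ ℓ) (N : ℕ → ℕ) (hN : ∀ n, 1 ≤ n → n ≤ ℓ → 1 ≤ N n)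
    (p : ℕ → ℕ → ℝ)
    (hp : ∀ n r, 1 ≤ n → n ≤ ℓ → 1 ≤ r → r ≤ N n → 0 ≤ p n r ∧ p n r ≤ 1)
    (η : ℕ → ℝ) (hη0 : η 0 = 1)
    (hηrec : ∀ n, 1 ≤ n → n ≤ ℓ →
      η n = ∑ r ∈ Finset.Icc 1 (N n), (Nat.choose (N n) r : ℝ) * p n r * (η (n - 1)) ^ r) :
    η ℓ ≤ 2 ^ (∏ n ∈ Finset.Icc 1 ℓ, N n) - 1 ∧
    η ℓ ≤ 2 ^ (((Finset.Icc 1 ℓ).sup N) ^ ℓ) :=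
  deep_nLIF_pieces_upper_bound_general ℓ N p hp η hη0 hηrec
end
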